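/- arXiv:1410.4230 — 11 statements merged into one kernel-verified Lean document; each statement's English description precedes it below -/
import Mathlib

section
/- Let X be a Mackey complete Hausdorff locally convex space whose topology is induced by a family Γ_X of continuous seminorms, and let (T(t))_{t≥0} be a C₀-semigroup on X. Then the following are equivalent: (iv) for every x ∈ X there exists ω > 0 such that e^{ωt} T(t)x → 0 in X as t → ∞ (strong exponential stability); (v) for every bounded set B ⊆ X there exists ω > 0 such that for every q ∈ Γ_X one has lim_{t→∞} sup_{x∈B} q(e^{ωt} T(t)x) = 0. -/
open Filter Topology Bornology Pointwise

/-- `X` is Mackey complete: every Mackey Cauchy sequence converges. -/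
def MackeyComplete (X : Type*) [AddCommGroup X] [Module ℝ X] [TopologicalSpace X] : Prop :=
  ∀ x : ℕ → X,
    (∃ (B : Set X) (b : ℕ → ℕ → ℝ), Bornology.IsVonNBounded ℝ B ∧
      Filter.Tendsto (fun p : ℕ × ℕ => b p.1 p.2) Filter.atTop (nhds 0) ∧
      ∀ n k : ℕ, x n - x k ∈ b n k • B) →
    ∃ l : X, Filter.Tendsto x Filter.atTop (nhds l)

/-!
(v) ⇒ (iv) is (v) for the bounded set `{x}`. For (iv) ⇒ (v) this is a uniform boundedness
argument. Enclose the bounded set `B` in a closed bounded absolutely convex `D`; by Mackey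
completeness the gauge of `D` makes `X` a complete extended metric space `X_D`, hence a Baire space.
Each `x` decays at some rate `1/(n+1)`, so for some `n` the points decaying at that rate form a
non-meagre subset of `X_D`; for each seminorm `q` this set is a countable union over `s ∈ ℕ` of the
closed absolutely convex sets `{x | q (T t x) ≤ exp (-t/(n+1)) for t ≥ s}`, one of which therefore
has interior in `X_D` and so contains a multiple `ρ • D`. This gives a bound uniform on `B`, and
halving the rate absorbs the constant `1/ρ`.
-/

open Set

theorem exists_not_isMeagre_of_subset_iUnion {Y κ : Type*} [TopologicalSpace Y] [Countable κ]
    {S : Set Y} (hS : ¬IsMeagre S) {A : κ → Set Y} (hSA : S ⊆ ⋃ k, A k) :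
    ∃ k, ¬IsMeagre (A k) := by
  contrapose! hS
  exact (isMeagre_iUnion hS).mono hSA

theorem egauge_neg {𝕜 E : Type*} [NormedField 𝕜] [AddCommGroup E] [Module 𝕜 E]
    (s : Set E) (x : E) : egauge 𝕜 s (-x) = egauge 𝕜 s x := by
  simpa using egauge_smul_right (c := (-1 : 𝕜)) (s := s) (by simp) x

section

variable {X : Type*} [AddCommGroup X] [Module ℝ X] {D : Set X}

theorem Balanced.mem_smul_of_egauge_lt (hD : Balanced ℝ D) {x : X} {r : ℝ}
    (h : egauge ℝ D x < ‖r‖ₑ) : x ∈ r • D := by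
  obtain ⟨c, hc, hcr⟩ := egauge_lt_iff.1 h
  exact hD.smul_mono (enorm_le_iff_norm_le.1 hcr.le) hc

theorem AbsConvex.egauge_add_le (hD : AbsConvex ℝ D) (x y : X) :
    egauge ℝ D (x + y) ≤ egauge ℝ D x + egauge ℝ D y := by
  refine ENNReal.le_iInf₂_add_iInf₂ fun a ha b hb => ?_
  have hab : x + y ∈ (|a| + |b|) • D := by
    rw [hD.2.add_smul (abs_nonneg a) (abs_nonneg b)]
    exact add_mem_add (hD.1.smul_mono (by simp) ha) (hD.1.smul_mono (by simp) hb)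
  calc egauge ℝ D (x + y) ≤ ‖|a| + |b|‖ₑ := egauge_le_of_mem_smul hab
    _ ≤ ‖|a|‖ₑ + ‖|b|‖ₑ := enorm_add_le _ _
    _ = ‖a‖ₑ + ‖b‖ₑ := by simp only [Real.enorm_abs]

/-- The space `X_D` of the disk `D`, realised on all of `X`: with the extended metric
`egauge D (x - y)` points whose difference lies outside the span of `D` are at distance `∞`. -/
def WithGauge (_D : Set X) : Type _ := X

namespace WithGauge

instance : AddCommGroup (WithGauge D) := inferInstanceAs (AddCommGroup X)
instance : Module ℝ (WithGauge D) := inferInstanceAs (Module ℝ X)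

variable (D) in
def equiv : WithGauge D ≃ₗ[ℝ] X := LinearEquiv.refl ℝ X

noncomputable abbrev pseudoEMetricSpace (hD : AbsConvex ℝ D) (hne : D.Nonempty) :
    PseudoEMetricSpace (WithGauge D) where
  edist x y := egauge ℝ D (equiv D x - equiv D y)
  edist_self x := by simp only [sub_self, egauge_zero_right ℝ hne]
  edist_comm x y := by simp only [← neg_sub (equiv D x), egauge_neg]
  edist_triangle x y z := by
    show egauge ℝ D _ ≤ egauge ℝ D _ + egauge ℝ D _
    rw [← sub_add_sub_cancel (equiv D x) (equiv D y) (equiv D z)]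
    exact hD.egauge_add_le _ _

variable [TopologicalSpace X] (hD : AbsConvex ℝ D) (hne : D.Nonempty)

include hD hne in
theorem completeSpace [IsTopologicalAddGroup X] [ContinuousConstSMul ℝ X]
    (hX : MackeyComplete X) (hDc : IsClosed D) (hDb : IsVonNBounded ℝ D) :
    letI := pseudoEMetricSpace hD hne
    CompleteSpace (WithGauge D) := by
  let := pseudoEMetricSpace hD hne
  set r : ℕ → ℝ := fun N => 2⁻¹ ^ N
  have hr : Tendsto r atTop (𝓝 0) :=
    tendsto_pow_atTop_nhds_zero_of_lt_one (by norm_num) (by norm_num)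
  refine EMetric.complete_of_convergent_controlled_sequences (fun N => ‖r N‖ₑ)
    (fun N => enorm_pos.2 (by positivity)) fun u hu => ?_
  have hmem : ∀ n m, equiv D (u n) - equiv D (u m) ∈ r (min n m) • D := fun n m =>
    hD.1.mem_smul_of_egauge_lt (hu _ n m (min_le_left n m) (min_le_right n m))
  have hmin : Tendsto (fun p : ℕ × ℕ => min p.1 p.2) atTop atTop :=
    tendsto_atTop_atTop.2 fun b => ⟨(b, b), fun p hp => le_min hp.1 hp.2⟩
  obtain ⟨l, hl⟩ :=
    hX (fun n => equiv D (u n)) ⟨D, fun n m => r (min n m), hDb, hr.comp hmin, hmem⟩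
  refine ⟨(equiv D).symm l, tendsto_iff_edist_tendsto_0.2 ?_⟩
  have hlim : ∀ n, equiv D (u n) - l ∈ r n • D := fun n =>
    (hDc.smul_of_ne_zero (by positivity)).mem_of_tendsto (tendsto_const_nhds.sub hl)
      (eventually_atTop.2 ⟨n, fun m hm => by simpa [min_eq_left hm] using hmem n m⟩)
  refine tendsto_of_tendsto_of_tendsto_of_le_of_le tendsto_const_nhds
    (by simpa using (continuous_enorm.tendsto 0).comp hr) (fun _ => zero_le) fun n => ?_
  exact egauge_le_of_mem_smul (by simpa using hlim n)

include hD hne in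
theorem continuous_equiv [IsTopologicalAddGroup X] (hDb : IsVonNBounded ℝ D) :
    letI := pseudoEMetricSpace hD hne
    Continuous (equiv D) := by
  let := pseudoEMetricSpace hD hne
  refine continuous_iff_continuousAt.2 fun x₀ => ?_
  rw [ContinuousAt, ← tendsto_sub_nhds_zero_iff]
  intro U hU
  rw [mem_map]
  obtain ⟨ε, hε, hεU⟩ := Metric.eventually_nhds_iff.1
    (hDb.tendsto_smallSets_nhds.eventually (eventually_smallSets_subset.2 hU))
  filter_upwards [Metric.eball_mem_nhds x₀ (enorm_pos.2 (half_pos hε).ne')] with y hy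
  refine hεU ?_ (hD.1.mem_smul_of_egauge_lt hy)
  simpa [abs_of_pos hε] using half_lt_self hε

include hD hne in
theorem exists_smul_subset_of_not_isMeagre [IsTopologicalAddGroup X] (hDb : IsVonNBounded ℝ D)
    {C : Set X} (hC : AbsConvex ℝ C) (hCc : IsClosed C) :
    letI := pseudoEMetricSpace hD hne
    ¬IsMeagre (equiv D ⁻¹' C) → ∃ ρ : ℝ, 0 < ρ ∧ ρ • D ⊆ C := by
  let := pseudoEMetricSpace hD hne
  intro hCm
  obtain ⟨x₀, hx₀⟩ : (interior (equiv D ⁻¹' C)).Nonempty := by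
    by_contra h
    exact hCm ((hCc.preimage (continuous_equiv hD hne hDb)).isNowhereDense_iff.2
      (not_nonempty_iff_eq_empty.1 h)).isMeagre
  obtain ⟨r, hr, hball⟩ := EMetric.isOpen_iff.1 isOpen_interior x₀ hx₀
  have hshift : ∀ y, egauge ℝ D y < r → equiv D x₀ + y ∈ C := fun y hy => by
    have hy' : (equiv D).symm (equiv D x₀ + y) ∈ Metric.eball x₀ r :=
      show egauge ℝ D (_ - equiv D x₀) < r by simpa using hy
    simpa using interior_subset (s := equiv D ⁻¹' C) (hball hy')
  obtain ⟨ρ, -, hρ, hρr⟩ := ENNReal.lt_iff_exists_real_btwn.1 hr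
  refine ⟨ρ, ENNReal.ofReal_pos.1 hρ, ?_⟩
  rintro _ ⟨d, hd, rfl⟩
  have hy : egauge ℝ D (ρ • d) < r := by
    refine (egauge_le_of_mem_smul (smul_mem_smul_set hd)).trans_lt ?_
    rwa [Real.enorm_eq_ofReal (ENNReal.ofReal_pos.1 hρ).le]
  -- `ρ • d` is the midpoint of `x₀ + ρ • d` and `-(x₀ - ρ • d)`, both in `C`.
  have h₁ := hshift _ hy
  have h₂ := hC.1.neg_mem_iff.2 (hshift _ ((egauge_neg _ _).trans_lt hy))
  convert hC.2 h₁ h₂ (by norm_num : (0 : ℝ) ≤ 1 / 2) (by norm_num : (0 : ℝ) ≤ 1 / 2) (by norm_num)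
    using 1
  module

end WithGauge

section Seminorms

variable {κ : Type*}

theorem absConvex_setOf_forall_seminorm_le (p : κ → Seminorm ℝ X) (r : κ → ℝ) :
    AbsConvex ℝ {x | ∀ j, p j x ≤ r j} := by
  simp_rw [← Seminorm.mem_closedBall_zero, ← mem_iInter, ofPred_mem_eq]
  exact AbsConvex.iInter fun j => ⟨(p j).balanced_closedBall_zero _, (p j).convex_closedBall _ _⟩

theorem isClosed_setOf_forall_seminorm_le [TopologicalSpace X] {p : κ → Seminorm ℝ X}
    (hp : ∀ j, Continuous (p j)) (r : κ → ℝ) : IsClosed {x | ∀ j, p j x ≤ r j} := by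
  simp_rw [ofPred_forall]
  exact isClosed_iInter fun j => isClosed_le (hp j) continuous_const

variable [TopologicalSpace X] {ι : Type*} {Γ : ι → Seminorm ℝ X}

theorem WithSeminorms.exists_isVonNBounded_closed_absConvex_superset (hΓ : WithSeminorms Γ)
    {B : Set X} (hB : IsVonNBounded ℝ B) :
    ∃ D, B ⊆ D ∧ AbsConvex ℝ D ∧ D.Nonempty ∧ IsClosed D ∧ IsVonNBounded ℝ D := by
  choose r hr hBr using hΓ.isVonNBounded_iff_seminorm_bounded.1 hB
  refine ⟨{x | ∀ i, Γ i x ≤ r i}, fun x hx i => (hBr i x hx).le,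
    absConvex_setOf_forall_seminorm_le Γ r, ⟨0, fun i => by simpa using (hr i).le⟩,
    isClosed_setOf_forall_seminorm_le hΓ.continuous_seminorm r,
    hΓ.isVonNBounded_iff_seminorm_bounded.2 fun i => ⟨r i + 1, by linarith [hr i], ?_⟩⟩
  exact fun x hx => (hx i).trans_lt (lt_add_one _)

end Seminorms

section Decay

variable [TopologicalSpace X]

def expDecaySet (q : Seminorm ℝ X) (T : ℝ → X →L[ℝ] X) (a s : ℝ) : Set X :=
  {x | ∀ t : Ici s, q (T t x) ≤ Real.exp (-(a * t))}

variable {T : ℝ → X →L[ℝ] X} {a s : ℝ}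

theorem absConvex_expDecaySet (q : Seminorm ℝ X) : AbsConvex ℝ (expDecaySet q T a s) :=
  absConvex_setOf_forall_seminorm_le (fun t : Ici s => q.comp (T t).toLinearMap) _

theorem isClosed_expDecaySet {q : Seminorm ℝ X} (hq : Continuous q) :
    IsClosed (expDecaySet q T a s) :=
  isClosed_setOf_forall_seminorm_le (p := fun t : Ici s => q.comp (T t).toLinearMap)
    (fun t => hq.comp (T t).continuous) _

theorem exists_forall_mem_expDecaySet {ι : Type*} {Γ : ι → Seminorm ℝ X}
    (hΓ : WithSeminorms Γ) {x : X}
    (hx : ∃ ω > (0 : ℝ), Tendsto (fun t : ℝ => Real.exp (ω * t) • T t x) atTop (𝓝 0)) :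
    ∃ n : ℕ, ∀ i, ∃ s : ℕ, x ∈ expDecaySet (Γ i) T (1 / (n + 1)) s := by
  obtain ⟨ω, hω, hx⟩ := hx
  obtain ⟨n, hn⟩ := exists_nat_one_div_lt hω
  refine ⟨n, fun i => ?_⟩
  obtain ⟨t₀, ht₀⟩ := eventually_atTop.1 ((hΓ.tendsto_nhds _ 0).1 hx i 1 one_pos)
  obtain ⟨s, hs⟩ := exists_nat_ge t₀
  refine ⟨s, fun ⟨t, (hst : (s : ℝ) ≤ t)⟩ => ?_⟩
  have hlt := ht₀ t (hs.trans hst)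
  rw [sub_zero, map_smul_eq_mul, Real.norm_of_nonneg (Real.exp_pos _).le] at hlt
  calc Γ i (T t x) ≤ Real.exp (-(ω * t)) := by
        rw [Real.exp_neg, inv_eq_one_div, le_div_iff₀ (Real.exp_pos _), mul_comm]
        exact hlt.le
    _ ≤ Real.exp (-(1 / (n + 1) * t)) := by
        gcongr
        exact (Nat.cast_nonneg s).trans hst

theorem exists_seminorm_exp_smul_le_of_smul_subset_expDecaySet {q : Seminorm ℝ X} {B : Set X}
    {ρ : ℝ} (ha : 0 < a) (hρ : 0 < ρ) (hB : ρ • B ⊆ expDecaySet q T a s) {ε : ℝ} (hε : 0 < ε) :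
    ∃ t₀ : ℝ, ∀ t ≥ t₀, ∀ x ∈ B, q (Real.exp (a / 2 * t) • T t x) ≤ ε := by
  have hlim : Tendsto (fun t => Real.exp (-(a / 2 * t)) / ρ) atTop (𝓝 0) := by
    simpa using (Real.tendsto_exp_neg_atTop_nhds_zero.comp
      (tendsto_id.const_mul_atTop (half_pos ha))).div_const ρ
  obtain ⟨t₀, ht₀⟩ := eventually_atTop.1 (hlim.eventually_le_const hε)
  refine ⟨max s t₀, fun t ht x hx => ?_⟩
  have hdecay := hB (smul_mem_smul_set hx) ⟨t, le_of_max_le_left ht⟩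
  rw [map_smul, map_smul_eq_mul, Real.norm_of_nonneg hρ.le] at hdecay
  rw [map_smul_eq_mul, Real.norm_of_nonneg (Real.exp_pos _).le]
  calc Real.exp (a / 2 * t) * q (T t x)
        ≤ Real.exp (a / 2 * t) * (Real.exp (-(a * t)) / ρ) := by
        gcongr
        rwa [le_div_iff₀ hρ, mul_comm]
    _ = Real.exp (-(a / 2 * t)) / ρ := by
        rw [mul_div_assoc', ← Real.exp_add]
        ring_nf
    _ ≤ ε := ht₀ t (le_of_max_le_right ht)

end Decay

theorem exists_smul_subset_expDecaySet_of_isVonNBounded [TopologicalSpace X] (hX : MackeyComplete X)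
    {ι : Type*} {Γ : ι → Seminorm ℝ X} (hΓ : WithSeminorms Γ) {T : ℝ → X →L[ℝ] X}
    (hstable : ∀ x : X, ∃ ω > (0 : ℝ),
      Tendsto (fun t : ℝ => Real.exp (ω * t) • T t x) atTop (𝓝 0))
    {B : Set X} (hB : IsVonNBounded ℝ B) :
    ∃ a > (0 : ℝ), ∀ i, ∃ s : ℝ, ∃ ρ : ℝ, 0 < ρ ∧ ρ • B ⊆ expDecaySet (Γ i) T a s := by
  have := hΓ.topologicalAddGroup
  have := hΓ.continuousSMul
  obtain ⟨D, hBD, hD, hne, hDc, hDb⟩ := hΓ.exists_isVonNBounded_closed_absConvex_superset hB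
  let := WithGauge.pseudoEMetricSpace hD hne
  have := WithGauge.completeSpace hD hne hX hDc hDb
  obtain ⟨n, hn⟩ := exists_not_isMeagre_of_subset_iUnion
    (S := univ) (not_isMeagre_of_isOpen isOpen_univ univ_nonempty) fun y _ =>
      mem_iUnion.2 (exists_forall_mem_expDecaySet hΓ (hstable (WithGauge.equiv D y)))
  refine ⟨1 / (n + 1), by positivity, fun i => ?_⟩
  obtain ⟨s, hs⟩ := exists_not_isMeagre_of_subset_iUnion hn fun y hy => mem_iUnion.2 (hy i)
  obtain ⟨ρ, hρ, hρD⟩ := WithGauge.exists_smul_subset_of_not_isMeagre hD hne hDb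
    (absConvex_expDecaySet (Γ i)) (isClosed_expDecaySet (hΓ.continuous_seminorm i)) hs
  exact ⟨s, ρ, hρ, (smul_set_mono hBD).trans hρD⟩

end

theorem statement1_general {X : Type*} [AddCommGroup X] [Module ℝ X] [TopologicalSpace X]
    (hX : MackeyComplete X)
    {ι : Type*} (Γ : ι → Seminorm ℝ X) (hΓ : WithSeminorms Γ)
    (T : ℝ → X →L[ℝ] X) :
    (∀ x : X, ∃ ω > (0:ℝ),
        Tendsto (fun t : ℝ => Real.exp (ω * t) • T t x) atTop (nhds 0)) ↔
    (∀ B : Set X, IsVonNBounded ℝ B → ∃ ω > (0:ℝ), ∀ i : ι, ∀ ε > (0:ℝ),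
        ∃ t₀ : ℝ, ∀ t ≥ t₀, ∀ x ∈ B, Γ i (Real.exp (ω * t) • T t x) ≤ ε) := by
  constructor
  · intro hstable B hB
    obtain ⟨a, ha, hdecay⟩ := exists_smul_subset_expDecaySet_of_isVonNBounded hX hΓ hstable hB
    refine ⟨a / 2, half_pos ha, fun i ε hε => ?_⟩
    obtain ⟨s, ρ, hρ, hρB⟩ := hdecay i
    exact exists_seminorm_exp_smul_le_of_smul_subset_expDecaySet ha hρ hρB hε
  · intro huniform x
    have := hΓ.continuousSMul
    obtain ⟨ω, hω, h⟩ := huniform {x} (isVonNBounded_singleton x)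
    refine ⟨ω, hω, (hΓ.tendsto_nhds _ 0).2 fun i ε hε => ?_⟩
    obtain ⟨t₀, ht₀⟩ := h i (ε / 2) (half_pos hε)
    exact eventually_atTop.2 ⟨t₀, fun t ht => by
      simpa using (ht₀ t ht x rfl).trans_lt (half_lt_self hε)⟩

/-- For a Mackey complete Hausdorff locally convex space `X` and a `C₀`-semigroup
`(T(t))_{t ≥ 0}` on `X`, strong exponential stability (iv) is equivalent to condition (v). -/
theorem statement1 {X : Type*} [AddCommGroup X] [Module ℝ X] [TopologicalSpace X]
    [T2Space X] (hX : MackeyComplete X)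
    {ι : Type*} [Nonempty ι] (Γ : ι → Seminorm ℝ X) (hΓ : WithSeminorms Γ)
    (T : ℝ → X →L[ℝ] X)
    (hT0 : T 0 = ContinuousLinearMap.id ℝ X)
    (hTsg : ∀ s t : ℝ, 0 ≤ s → 0 ≤ t → T (s + t) = (T s).comp (T t))
    (hTc : ∀ x : X, ContinuousOn (fun t : ℝ => T t x) (Set.Ici 0)) :
    (∀ x : X, ∃ ω > (0:ℝ),
        Tendsto (fun t : ℝ => Real.exp (ω * t) • T t x) atTop (nhds 0)) ↔
    (∀ B : Set X, IsVonNBounded ℝ B → ∃ ω > (0:ℝ), ∀ i : ι, ∀ ε > (0:ℝ),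
        ∃ t₀ : ℝ, ∀ t ≥ t₀, ∀ x ∈ B, Γ i (Real.exp (ω * t) • T t x) ≤ ε) :=
  statement1_general hX Γ hΓ T
end

section
/- Let X be a barrelled Hausdorff locally convex space whose topology is induced by a family Γ_X of continuous seminorms, and let (T(t))_{t≥0} be an exponentially bounded C₀-semigroup on X. If there exists β ≥ 1 such that ∫₀^∞ q(T(t)x)^β dt < ∞ for every q ∈ Γ_X and every x ∈ X, then (T(t))_{t≥0} is super polynomially stable, i.e., for every α > 1, every bounded set B ⊆ X and every q ∈ Γ_X one has lim_{t→∞} sup_{x∈B} q(t^α T(t)x) = 0. -/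
/-!
Barrelledness is used twice, through Banach–Steinhaus. Since orbits are continuous, the family
`{T t | t ∈ [0, a]}` is equicontinuous, so the truncated seminorms `x ↦ ‖q (T · x)‖_{L^β(0,a)}` are
continuous; they are bounded in `a` by the finite integral over `(0, ∞)`, hence dominated by one
continuous seminorm `P`. Comparing `q (T t x)` with the orbit of `x` on `[t - 1, t]` shows that the
semigroup is uniformly bounded, and comparing it with the orbit on `[0, t]` then gives
`q (T t x) ≤ t ^ (-1/β) * P x`. Writing `T t = T (t/2) ∘ T (t/2)` doubles any decay rate, so every
polynomial rate is reached.
-/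

open Filter Topology Bornology MeasureTheory Set
open scoped ENNReal NNReal

namespace Seminorm

variable {𝕜 X : Type*} [NontriviallyNormedField 𝕜] [AddCommGroup X] [Module 𝕜 X]

section Lp

variable {α : Type*} [MeasurableSpace α]

noncomputable def ofMemLp (F : α → Seminorm 𝕜 X) (p : ℝ≥0∞) (μ : Measure α) (hp : 1 ≤ p)
    (hF : ∀ x, MemLp (fun a => F a x) p μ) : Seminorm 𝕜 X :=
  Seminorm.of (fun x => (eLpNorm (fun a => F a x) p μ).toReal)
    (fun x y => by
      rw [← ENNReal.toReal_add (hF x).eLpNorm_ne_top (hF y).eLpNorm_ne_top]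
      refine ENNReal.toReal_mono
        (ENNReal.add_ne_top.2 ⟨(hF x).eLpNorm_ne_top, (hF y).eLpNorm_ne_top⟩) ?_
      refine (eLpNorm_mono_real fun a => ?_).trans
        (eLpNorm_add_le (hF x).aestronglyMeasurable (hF y).aestronglyMeasurable hp)
      rw [Real.norm_of_nonneg (apply_nonneg _ _)]
      exact map_add_le_add _ _ _)
    (fun c x => by
      have h : (fun a => F a (c • x)) = ‖c‖ • fun a => F a x := by
        ext a; simp [map_smul_eq_mul]
      rw [h, eLpNorm_const_smul, ENNReal.toReal_mul, toReal_enorm, norm_norm])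

end Lp

theorem exists_continuous_ge_of_bddAbove [TopologicalSpace X] [BarrelledSpace 𝕜 X] {κ : Type*}
    (F : κ → Seminorm 𝕜 X) (hF : ∀ k, Continuous (F k))
    (hbdd : ∀ x, BddAbove (range fun k => F k x)) :
    ∃ p : Seminorm 𝕜 X, Continuous p ∧ ∀ k, F k ≤ p := by
  have hF' : BddAbove (range F) := Seminorm.bddAbove_range_iff.2 hbdd
  refine ⟨⨆ k, F k, ?_, fun k => le_ciSup hF' k⟩
  rw [Seminorm.coe_iSup_eq hF']
  exact Seminorm.continuous_iSup F hF hF'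

end Seminorm

theorem Bornology.IsVonNBounded.exists_seminorm_le {𝕜 X : Type*} [NontriviallyNormedField 𝕜]
    [AddCommGroup X] [Module 𝕜 X] [TopologicalSpace X] {B : Set X} (hB : IsVonNBounded 𝕜 B)
    {p : Seminorm 𝕜 X} (hp : Continuous p) : ∃ r, ∀ x ∈ B, p x ≤ r := by
  obtain ⟨r, hr, hB⟩ := (hB (Seminorm.ball_mem_nhds hp one_pos)).exists_pos
  obtain ⟨c, hc⟩ := NormedField.exists_lt_norm 𝕜 r
  refine ⟨‖c‖, fun x hx => ?_⟩
  have hc0 : c ≠ 0 := norm_pos_iff.1 (hr.trans hc)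
  have := hB c hc.le hx
  rw [Seminorm.smul_ball_zero hc0, mul_one, Seminorm.mem_ball_zero] at this
  exact this.le

theorem WithSeminorms.eLpNorm_comp_lt_top {𝕜 X ι α : Type*} [NontriviallyNormedField 𝕜]
    [AddCommGroup X] [Module 𝕜 X] [TopologicalSpace X] [MeasurableSpace α] {Γ : ι → Seminorm 𝕜 X}
    (hΓ : WithSeminorms Γ) {p : ℝ≥0∞} {μ : Measure α} {f : α → X}
    (hf : ∀ i, MemLp (fun a => Γ i (f a)) p μ) {q : Seminorm 𝕜 X} (hq : Continuous q) :
    eLpNorm (fun a => q (f a)) p μ < ⊤ := by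
  obtain ⟨s, C, -, hqC⟩ := Seminorm.bound_of_continuous hΓ q hq
  have hsum : MemLp (fun a => (C : ℝ) * ∑ i ∈ s, Γ i (f a)) p μ :=
    (memLp_finsetSum s fun i _ => hf i).const_mul _
  refine lt_of_le_of_lt (eLpNorm_mono_real fun a => ?_) hsum.eLpNorm_lt_top
  rw [Real.norm_of_nonneg (apply_nonneg _ _)]
  calc q (f a) ≤ C * s.sup Γ (f a) := hqC (f a)
    _ ≤ C * ∑ i ∈ s, Γ i (f a) := by
      gcongr
      simpa using Seminorm.finset_sup_le_sum Γ s (f a)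

theorem le_eLpNorm_restrict_Ioc {p : ℝ≥0∞} (hp0 : p ≠ 0) (hp : p ≠ ⊤) {f : ℝ → ℝ} {c s t : ℝ}
    (hc : 0 ≤ c) (hst : s ≤ t) (hf : ∀ u ∈ Ioc s t, c ≤ f u) :
    ENNReal.ofReal (c * (t - s) ^ p.toReal⁻¹) ≤ eLpNorm f p (volume.restrict (Ioc s t)) := by
  have hconst : eLpNorm (fun _ => c) p (volume.restrict (Ioc s t))
      = ENNReal.ofReal (c * (t - s) ^ p.toReal⁻¹) := by
    rw [eLpNorm_const' c hp0 hp, Measure.restrict_apply_univ, Real.volume_Ioc,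
      Real.enorm_of_nonneg hc, one_div, ENNReal.ofReal_rpow_of_nonneg (sub_nonneg.2 hst)
        (inv_nonneg.2 ENNReal.toReal_nonneg), ← ENNReal.ofReal_mul hc]
  rw [← hconst]
  refine eLpNorm_mono_ae_real (ae_restrict_of_forall_mem measurableSet_Ioc fun u hu => ?_)
  rw [Real.norm_of_nonneg hc]
  exact hf u hu

theorem mul_rpow_le_of_eLpNorm_restrict_Ioc_le {p : ℝ≥0∞} (hp0 : p ≠ 0) (hp : p ≠ ⊤)
    {f : ℝ → ℝ} {b c s t : ℝ} (hc : 0 ≤ c) (hs : 0 ≤ s) (hst : s ≤ t)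
    (hf : ∀ u ∈ Ioc s t, c ≤ f u) (hb : 0 ≤ b)
    (hfb : eLpNorm f p (volume.restrict (Ioc 0 t)) ≤ ENNReal.ofReal b) :
    c * (t - s) ^ p.toReal⁻¹ ≤ b := by
  rw [← ENNReal.ofReal_le_ofReal_iff hb]
  calc ENNReal.ofReal (c * (t - s) ^ p.toReal⁻¹)
      ≤ eLpNorm f p (volume.restrict (Ioc s t)) := le_eLpNorm_restrict_Ioc hp0 hp hc hst hf
    _ ≤ eLpNorm f p (volume.restrict (Ioc 0 t)) :=
      eLpNorm_mono_measure _ (Measure.restrict_mono (Ioc_subset_Ioc_left hs) le_rfl)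
    _ ≤ ENNReal.ofReal b := hfb

section Semigroup

variable {𝕜 X : Type*} [NontriviallyNormedField 𝕜] [AddCommGroup X] [Module 𝕜 X]
  [TopologicalSpace X] {T : ℝ → X →L[𝕜] X}

theorem semigroup_apply_eq_apply_sub_apply
    (hTsg : ∀ s t : ℝ, 0 ≤ s → 0 ≤ t → T (s + t) = (T s).comp (T t))
    {u t : ℝ} (hu : 0 ≤ u) (hut : u ≤ t) (x : X) : T t x = T (t - u) (T u x) := by
  rw [← ContinuousLinearMap.comp_apply, ← hTsg _ _ (sub_nonneg.2 hut) hu, sub_add_cancel]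

def HasPolynomialDecay (T : ℝ → X →L[𝕜] X) (γ : ℝ) : Prop :=
  ∀ q : Seminorm 𝕜 X, Continuous q →
    ∃ p : Seminorm 𝕜 X, Continuous p ∧ ∀ t ≥ 1, ∀ x, q (T t x) ≤ t ^ (-γ) * p x

theorem HasPolynomialDecay.mono {γ γ' : ℝ} (h : HasPolynomialDecay T γ) (hγ : γ' ≤ γ) :
    HasPolynomialDecay T γ' := fun q hq =>
  (h q hq).imp fun _ ⟨hp, hqp⟩ => ⟨hp, fun t ht x => (hqp t ht x).trans <| by gcongr⟩

variable [BarrelledSpace 𝕜 X]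

theorem exists_continuous_seminorm_orbit_le_on_Icc
    (hTc : ∀ x : X, ContinuousOn (fun t : ℝ => T t x) (Ici 0))
    {q : Seminorm 𝕜 X} (hq : Continuous q) (a : ℝ) :
    ∃ p : Seminorm 𝕜 X, Continuous p ∧ ∀ t ∈ Icc 0 a, ∀ x, q (T t x) ≤ p x := by
  obtain ⟨p, hp, hle⟩ := Seminorm.exists_continuous_ge_of_bddAbove
    (fun t : Icc 0 a => q.comp (T t : X →ₗ[𝕜] X)) (fun t => hq.comp (T t).continuous)
    (fun x => by
      simpa only [Seminorm.comp_apply, ContinuousLinearMap.coe_coe, image_eq_range,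
        Function.comp_def] using
        isCompact_Icc.bddAbove_image ((hq.comp_continuousOn (hTc x)).mono Icc_subset_Ici_self))
  exact ⟨p, hp, fun t ht x => hle ⟨t, ht⟩ x⟩

theorem memLp_orbit_restrict_Ioc
    (hTc : ∀ x : X, ContinuousOn (fun t : ℝ => T t x) (Ici 0))
    {q : Seminorm 𝕜 X} (hq : Continuous q) (p : ℝ≥0∞) (a : ℝ) (x : X) :
    MemLp (fun t => q (T t x)) p (volume.restrict (Ioc 0 a)) := by
  obtain ⟨r, -, hr⟩ := exists_continuous_seminorm_orbit_le_on_Icc hTc hq a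
  refine MemLp.of_bound (((hq.comp_continuousOn (hTc x)).mono fun t ht => le_of_lt ht.1)
    |>.aestronglyMeasurable measurableSet_Ioc) (r x)
    (ae_restrict_of_forall_mem measurableSet_Ioc fun t ht => ?_)
  rw [Real.norm_of_nonneg (apply_nonneg _ _)]
  exact hr t (Ioc_subset_Icc_self ht) x

theorem HasPolynomialDecay.two_mul
    (hTsg : ∀ s t : ℝ, 0 ≤ s → 0 ≤ t → T (s + t) = (T s).comp (T t))
    (hTc : ∀ x : X, ContinuousOn (fun t : ℝ => T t x) (Ici 0))
    {γ : ℝ} (hγ : 0 ≤ γ) (h : HasPolynomialDecay T γ) : HasPolynomialDecay T (2 * γ) := by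
  intro q hq
  obtain ⟨p₁, hp₁, hqp₁⟩ := h q hq
  obtain ⟨p₂, hp₂, hp₁p₂⟩ := h p₁ hp₁
  obtain ⟨p₀, hp₀, hqp₀⟩ := exists_continuous_seminorm_orbit_le_on_Icc hTc hq 2
  refine ⟨((2 : ℝ≥0) ^ (2 * γ)) • (p₂ + p₀),
    by rw [FunLike.coe_smul, FunLike.coe_add]; exact (hp₂.add hp₀).const_smul _, fun t ht x => ?_⟩
  have ht0 : 0 < t := zero_lt_one.trans_le ht
  have hhalf : q (T t x) ≤ (t / 2) ^ (-(2 * γ)) * (p₂ x + p₀ x) := by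
    rcases le_total t 2 with ht2 | ht2
    · have h1 : 1 ≤ (t / 2) ^ (-(2 * γ)) :=
        Real.one_le_rpow_of_pos_of_le_one_of_nonpos (by positivity) (by linarith) (by linarith)
      calc q (T t x) ≤ p₀ x := hqp₀ t ⟨ht0.le, ht2⟩ x
        _ ≤ (t / 2) ^ (-(2 * γ)) * (p₂ x + p₀ x) := by
          nlinarith [apply_nonneg p₂ x, apply_nonneg p₀ x]
    · have ht2' : 1 ≤ t / 2 := by linarith
      calc q (T t x) = q (T (t / 2) (T (t / 2) x)) := by
            rw [semigroup_apply_eq_apply_sub_apply hTsg (u := t / 2) (by linarith) (by linarith),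
              sub_half]
        _ ≤ (t / 2) ^ (-γ) * p₁ (T (t / 2) x) := hqp₁ _ ht2' _
        _ ≤ (t / 2) ^ (-γ) * ((t / 2) ^ (-γ) * p₂ x) := by gcongr; exact hp₁p₂ _ ht2' _
        _ = (t / 2) ^ (-(2 * γ)) * p₂ x := by
          rw [← mul_assoc, ← Real.rpow_add (by positivity)]; ring_nf
        _ ≤ (t / 2) ^ (-(2 * γ)) * (p₂ x + p₀ x) := by
          gcongr; exact le_add_of_nonneg_right (apply_nonneg p₀ x)
  calc q (T t x) ≤ (t / 2) ^ (-(2 * γ)) * (p₂ x + p₀ x) := hhalf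
    _ = t ^ (-(2 * γ)) * (((2 : ℝ≥0) ^ (2 * γ)) • (p₂ + p₀)) x := by
      rw [smul_apply, NNReal.smul_def, smul_eq_mul, NNReal.coe_rpow, add_apply,
        Real.div_rpow ht0.le zero_le_two, Real.rpow_neg zero_le_two, div_inv_eq_mul]
      push_cast; ring

variable [IsTopologicalAddGroup X]

theorem exists_continuous_eLpNorm_orbit_le
    (hTc : ∀ x : X, ContinuousOn (fun t : ℝ => T t x) (Ici 0))
    {p : ℝ≥0∞} (hp : 1 ≤ p) {q : Seminorm 𝕜 X} (hq : Continuous q)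
    (hint : ∀ x, eLpNorm (fun t => q (T t x)) p (volume.restrict (Ioi 0)) < ⊤) :
    ∃ P : Seminorm 𝕜 X, Continuous P ∧ ∀ a x,
      eLpNorm (fun t => q (T t x)) p (volume.restrict (Ioc 0 a)) ≤ ENNReal.ofReal (P x) := by
  let S : ℝ → Seminorm 𝕜 X := fun a =>
    Seminorm.ofMemLp (fun t => q.comp (T t : X →ₗ[𝕜] X)) p (volume.restrict (Ioc 0 a)) hp
      (memLp_orbit_restrict_Ioc hTc hq p a)
  have hS_apply : ∀ a x,
      S a x = (eLpNorm (fun t => q (T t x)) p (volume.restrict (Ioc 0 a))).toReal :=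
    fun _ _ => rfl
  have hS_cont : ∀ a, Continuous (S a) := by
    intro a
    obtain ⟨r, hr, hqr⟩ := exists_continuous_seminorm_orbit_le_on_Icc hTc hq a
    obtain ⟨c, hc⟩ : ∃ c : ℝ≥0, (c : ℝ≥0∞) = volume (Ioc (0 : ℝ) a) ^ p.toReal⁻¹ :=
      ⟨_, ENNReal.coe_toNNReal (by simp [Real.volume_Ioc])⟩
    refine Seminorm.continuous_of_le (q := c • r)
      (by rw [FunLike.coe_smul]; exact hr.const_smul c) fun x => ?_
    rw [smul_apply, NNReal.smul_def, smul_eq_mul, hS_apply]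
    refine ENNReal.toReal_le_of_le_ofReal (mul_nonneg c.coe_nonneg (apply_nonneg _ _)) ?_
    rw [ENNReal.ofReal_mul c.coe_nonneg, ENNReal.ofReal_coe_nnreal, hc,
      ← Measure.restrict_apply_univ]
    refine eLpNorm_le_of_ae_bound <| ae_restrict_of_forall_mem measurableSet_Ioc fun t ht => ?_
    rw [Real.norm_of_nonneg (apply_nonneg _ _)]
    exact hqr t (Ioc_subset_Icc_self ht) x
  have hS_le : ∀ a x, ENNReal.ofReal (S a x)
      = eLpNorm (fun t => q (T t x)) p (volume.restrict (Ioc 0 a)) := fun a x =>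
    (hS_apply a x).symm ▸
      ENNReal.ofReal_toReal (memLp_orbit_restrict_Ioc hTc hq p a x).eLpNorm_ne_top
  obtain ⟨P, hP, hSP⟩ := Seminorm.exists_continuous_ge_of_bddAbove S hS_cont fun x =>
    ⟨(eLpNorm (fun t => q (T t x)) p (volume.restrict (Ioi 0))).toReal, by
      rintro _ ⟨a, rfl⟩
      exact ENNReal.toReal_mono (hint x).ne
        (eLpNorm_mono_measure _ (Measure.restrict_mono Ioc_subset_Ioi_self le_rfl))⟩
  exact ⟨P, hP, fun a x => (hS_le a x).symm.le.trans (ENNReal.ofReal_le_ofReal (hSP a x))⟩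

theorem exists_continuous_seminorm_orbit_le
    (hTsg : ∀ s t : ℝ, 0 ≤ s → 0 ≤ t → T (s + t) = (T s).comp (T t))
    (hTc : ∀ x : X, ContinuousOn (fun t : ℝ => T t x) (Ici 0))
    {p : ℝ≥0∞} (hp1 : 1 ≤ p) (hp : p ≠ ⊤)
    (hint : ∀ q : Seminorm 𝕜 X, Continuous q →
      ∀ x, eLpNorm (fun t => q (T t x)) p (volume.restrict (Ioi 0)) < ⊤)
    {q : Seminorm 𝕜 X} (hq : Continuous q) :
    ∃ P : Seminorm 𝕜 X, Continuous P ∧ ∀ t ≥ 0, ∀ x, q (T t x) ≤ P x := by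
  obtain ⟨r, hr, hqr⟩ := exists_continuous_seminorm_orbit_le_on_Icc hTc hq 1
  obtain ⟨P, hP, hrP⟩ := exists_continuous_eLpNorm_orbit_le hTc hp1 hr (hint r hr)
  refine ⟨r + P, by rw [FunLike.coe_add]; exact hr.add hP, fun t ht x => ?_⟩
  rw [add_apply]
  rcases le_total t 1 with ht1 | ht1
  · exact (hqr t ⟨ht, ht1⟩ x).trans (le_add_of_nonneg_right (apply_nonneg P x))
  · have hcomp : ∀ u ∈ Ioc (t - 1) t, q (T t x) ≤ r (T u x) := fun u hu => by
      rw [semigroup_apply_eq_apply_sub_apply hTsg (by linarith [hu.1]) hu.2]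
      exact hqr _ ⟨sub_nonneg.2 hu.2, by linarith [hu.1]⟩ _
    have h := mul_rpow_le_of_eLpNorm_restrict_Ioc_le (zero_lt_one.trans_le hp1).ne' hp
      (apply_nonneg q (T t x)) (by linarith) (by linarith) hcomp (apply_nonneg P x) (hrP t x)
    rw [sub_sub_cancel, Real.one_rpow, mul_one] at h
    exact h.trans (le_add_of_nonneg_left (apply_nonneg r x))

theorem hasPolynomialDecay_inv_toReal
    (hTsg : ∀ s t : ℝ, 0 ≤ s → 0 ≤ t → T (s + t) = (T s).comp (T t))
    (hTc : ∀ x : X, ContinuousOn (fun t : ℝ => T t x) (Ici 0))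
    {p : ℝ≥0∞} (hp1 : 1 ≤ p) (hp : p ≠ ⊤)
    (hint : ∀ q : Seminorm 𝕜 X, Continuous q →
      ∀ x, eLpNorm (fun t => q (T t x)) p (volume.restrict (Ioi 0)) < ⊤) :
    HasPolynomialDecay T p.toReal⁻¹ := by
  intro q hq
  obtain ⟨r, hr, hqr⟩ := exists_continuous_seminorm_orbit_le hTsg hTc hp1 hp hint hq
  obtain ⟨P, hP, hrP⟩ := exists_continuous_eLpNorm_orbit_le hTc hp1 hr (hint r hr)
  refine ⟨P, hP, fun t ht x => ?_⟩
  have ht0 : 0 < t := zero_lt_one.trans_le ht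
  have hcomp : ∀ u ∈ Ioc 0 t, q (T t x) ≤ r (T u x) := fun u hu => by
    rw [semigroup_apply_eq_apply_sub_apply hTsg hu.1.le hu.2]
    exact hqr _ (sub_nonneg.2 hu.2) _
  have h := mul_rpow_le_of_eLpNorm_restrict_Ioc_le (zero_lt_one.trans_le hp1).ne' hp
    (apply_nonneg q (T t x)) le_rfl ht0.le hcomp (apply_nonneg P x) (hrP t x)
  rwa [sub_zero, ← le_div_iff₀ (by positivity), div_eq_inv_mul, ← Real.rpow_neg ht0.le] at h

theorem hasPolynomialDecay
    (hTsg : ∀ s t : ℝ, 0 ≤ s → 0 ≤ t → T (s + t) = (T s).comp (T t))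
    (hTc : ∀ x : X, ContinuousOn (fun t : ℝ => T t x) (Ici 0))
    {p : ℝ≥0∞} (hp1 : 1 ≤ p) (hp : p ≠ ⊤)
    (hint : ∀ q : Seminorm 𝕜 X, Continuous q →
      ∀ x, eLpNorm (fun t => q (T t x)) p (volume.restrict (Ioi 0)) < ⊤)
    (γ : ℝ) : HasPolynomialDecay T γ := by
  have hpow : ∀ n : ℕ, HasPolynomialDecay T (2 ^ n * p.toReal⁻¹) := by
    intro n
    induction n with
    | zero => simpa using hasPolynomialDecay_inv_toReal hTsg hTc hp1 hp hint
    | succ n ih => rw [pow_succ', mul_assoc]; exact ih.two_mul hTsg hTc (by positivity)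
  have hp0 : 0 < p.toReal := ENNReal.toReal_pos (zero_lt_one.trans_le hp1).ne' hp
  obtain ⟨n, hn⟩ := pow_unbounded_of_one_lt (γ * p.toReal) one_lt_two
  exact (hpow n).mono (by rw [← div_eq_mul_inv, le_div_iff₀ hp0]; exact hn.le)

end Semigroup

theorem MeasureTheory.memLp_ofReal_of_lintegral_rpow_lt_top {α : Type*} [MeasurableSpace α]
    {μ : Measure α} {f : α → ℝ} (hf : AEStronglyMeasurable f μ) (hf0 : ∀ a, 0 ≤ f a) {β : ℝ}
    (hβ : 0 < β) (h : ∫⁻ a, ENNReal.ofReal (f a ^ β) ∂μ < ⊤) : MemLp f (ENNReal.ofReal β) μ := by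
  refine ⟨hf, (eLpNorm_lt_top_iff_lintegral_rpow_enorm_lt_top (by simpa using hβ)
    ENNReal.ofReal_ne_top).2 ?_⟩
  simpa only [ENNReal.toReal_ofReal hβ.le, Real.enorm_of_nonneg (hf0 _),
    ENNReal.ofReal_rpow_of_nonneg (hf0 _) hβ.le] using h

theorem statement4_general {X : Type*} [AddCommGroup X] [Module ℝ X] [TopologicalSpace X]
    [BarrelledSpace ℝ X]
    {ι : Type*} (Γ : ι → Seminorm ℝ X) (hΓ : WithSeminorms Γ)
    (T : ℝ → X →L[ℝ] X)
    (hTsg : ∀ s t : ℝ, 0 ≤ s → 0 ≤ t → T (s + t) = (T s).comp (T t))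
    (hTc : ∀ x : X, ContinuousOn (fun t : ℝ => T t x) (Set.Ici 0))
    (hint : ∃ β : ℝ, 1 ≤ β ∧ ∀ i : ι, ∀ x : X,
      ∫⁻ t in Set.Ioi (0:ℝ), ENNReal.ofReal ((Γ i (T t x)) ^ β) < ⊤) :
    ∀ α > (1:ℝ), ∀ B : Set X, IsVonNBounded ℝ B → ∀ i : ι, ∀ ε > (0:ℝ),
      ∃ t₀ : ℝ, ∀ t ≥ t₀, ∀ x ∈ B, Γ i ((t ^ α : ℝ) • T t x) ≤ ε := by
  obtain ⟨β, hβ1, hβint⟩ := hint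
  have := hΓ.topologicalAddGroup
  have horbit : ∀ q : Seminorm ℝ X, Continuous q → ∀ x,
      eLpNorm (fun t => q (T t x)) (ENNReal.ofReal β) (volume.restrict (Ioi 0)) < ⊤ :=
    fun q hq x => hΓ.eLpNorm_comp_lt_top (fun i => memLp_ofReal_of_lintegral_rpow_lt_top
      ((((hΓ.continuous_seminorm i).comp_continuousOn (hTc x)).mono Ioi_subset_Ici_self)
        |>.aestronglyMeasurable measurableSet_Ioi)
      (fun _ => apply_nonneg _ _) (by linarith) (hβint i x)) hq
  intro α _ B hB i ε hε
  obtain ⟨q, hq, hdecay⟩ := hasPolynomialDecay hTsg hTc (by simpa using hβ1) ENNReal.ofReal_ne_top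
    horbit (α + 1) (Γ i) (hΓ.continuous_seminorm i)
  obtain ⟨r, hr⟩ := hB.exists_seminorm_le hq
  refine ⟨max 1 (r / ε), fun t ht x hx => ?_⟩
  have ht1 : 1 ≤ t := le_of_max_le_left ht
  have ht0 : 0 < t := zero_lt_one.trans_le ht1
  calc Γ i (t ^ α • T t x) = t ^ α * Γ i (T t x) := by
        rw [map_smul_eq_mul, Real.norm_of_nonneg (by positivity)]
    _ ≤ t ^ α * (t ^ (-(α + 1)) * r) := by
        gcongr
        exact (hdecay t ht1 x).trans (by gcongr; exact hr x hx)
    _ = r / t := by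
        rw [Real.rpow_neg ht0.le, Real.rpow_add ht0, Real.rpow_one]
        field_simp
    _ ≤ ε := (div_le_iff₀' ht0).2 ((div_le_iff₀ hε).1 (le_of_max_le_right ht))

/-- Let `X` be a barrelled Hausdorff locally convex space and `(T(t))_{t ≥ 0}` an
exponentially bounded `C₀`-semigroup on `X`. If for some `β ≥ 1` all integrals
`∫₀^∞ q(T(t)x)^β dt` are finite, then `(T(t))` is super polynomially stable. -/
theorem statement4 {X : Type*} [AddCommGroup X] [Module ℝ X] [TopologicalSpace X]
    [T2Space X] [BarrelledSpace ℝ X]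
    {ι : Type*} [Nonempty ι] (Γ : ι → Seminorm ℝ X) (hΓ : WithSeminorms Γ)
    (T : ℝ → X →L[ℝ] X)
    (hT0 : T 0 = ContinuousLinearMap.id ℝ X)
    (hTsg : ∀ s t : ℝ, 0 ≤ s → 0 ≤ t → T (s + t) = (T s).comp (T t))
    (hTc : ∀ x : X, ContinuousOn (fun t : ℝ => T t x) (Set.Ici 0))
    (hexp : ∀ i : ι, ∃ j : ι, ∃ M : ℝ, 1 ≤ M ∧ ∃ ω : ℝ,
      ∀ t : ℝ, 0 ≤ t → ∀ x : X, Γ i (T t x) ≤ M * Real.exp (ω * t) * Γ j x)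
    (hint : ∃ β : ℝ, 1 ≤ β ∧ ∀ i : ι, ∀ x : X,
      ∫⁻ t in Set.Ioi (0:ℝ), ENNReal.ofReal ((Γ i (T t x)) ^ β) < ⊤) :
    ∀ α > (1:ℝ), ∀ B : Set X, IsVonNBounded ℝ B → ∀ i : ι, ∀ ε > (0:ℝ),
      ∃ t₀ : ℝ, ∀ t ≥ t₀, ∀ x ∈ B, Γ i ((t ^ α : ℝ) • T t x) ≤ ε :=
  statement4_general Γ hΓ T hTsg hTc hint
end

section
/- Let X be a Mackey complete Hausdorff locally convex space whose topology is induced by a family Γ_X of continuous seminorms, and let (T(t))_{t≥0} be an exponentially bounded C₀-semigroup on X. Then the following are equivalent: (vi) for every x ∈ X there exists α > 1 such that t^α T(t)x → 0 in X as t → ∞; (vii) for every bounded set B ⊆ X there exists α > 1 such that for every q ∈ Γ_X one has lim_{t→∞} sup_{x∈B} q(t^α T(t)x) = 0. -/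
/-!
(vii) ⇒ (vi) is the case `B = {x}`. For (vi) ⇒ (vii), every orbit `t ↦ t • T t x` is bounded on
`[0, ∞)` (continuity on compact intervals, decay at infinity), so the family `{t • T t}` is
pointwise bounded. Mackey completeness gives the uniform boundedness principle: the closed
absolutely convex hull `D` of a bounded set is a Banach disk, i.e. its span normed by the gauge of
`D` is a Banach space, on which Banach–Steinhaus applies. Hence `{s • T s y | s ≥ 0, y ∈ B'}` is
bounded for every bounded `B'`, and applying this twice to
`t ^ (3/2) • T t = 4 t ^ (-1/2) • ((t/2) • T (t/2)) ∘ ((t/2) • T (t/2))` gives (vii) with `α = 3/2`.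
-/

open Filter Topology Bornology Pointwise

open Set

section BanachDisk

variable {X : Type*} [AddCommGroup X] [Module ℝ X]

theorem AbsConvex.exists_mem_smul_of_mem_span {D : Set X} (hD : AbsConvex ℝ D) (h0 : (0 : X) ∈ D)
    {x : X} (hx : x ∈ Submodule.span ℝ D) : ∃ r : ℝ, 0 < r ∧ x ∈ r • D := by
  induction hx using Submodule.span_induction with
  | mem y hy => exact ⟨1, one_pos, by rwa [one_smul]⟩
  | zero => exact ⟨1, one_pos, by rwa [one_smul]⟩
  | add y z _ _ ihy ihz =>
    obtain ⟨r, hr, hyr⟩ := ihy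
    obtain ⟨s, hs, hzs⟩ := ihz
    exact ⟨r + s, add_pos hr hs, hD.2.add_smul hr.le hs.le ▸ add_mem_add hyr hzs⟩
  | smul c y _ ihy =>
    obtain ⟨r, hr, hyr⟩ := ihy
    refine ⟨(|c| + 1) * r, by positivity, hD.1.smul_mono (a := c * r) ?_ ?_⟩
    · simp only [Real.norm_eq_abs, abs_mul, abs_of_pos hr, abs_of_pos (by positivity : 0 < |c| + 1)]
      gcongr
      linarith
    · rw [mul_smul]
      exact smul_mem_smul_set hyr

/-- The span of `D`, normed by the gauge of `D`: the space `X_D` of the theory of Banach disks.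
It is a type synonym so that its norm topology does not clash with the subspace topology from `X`. -/
def DiskSpan (D : Set X) (_hD : AbsConvex ℝ D) (_h0 : (0 : X) ∈ D) : Type _ :=
  Submodule.span ℝ D

namespace DiskSpan

variable {D : Set X} {hD : AbsConvex ℝ D} {h0 : (0 : X) ∈ D}

instance : AddCommGroup (DiskSpan D hD h0) := inferInstanceAs (AddCommGroup (Submodule.span ℝ D))

instance : Module ℝ (DiskSpan D hD h0) := inferInstanceAs (Module ℝ (Submodule.span ℝ D))

variable (D hD h0) in
def incl : DiskSpan D hD h0 →ₗ[ℝ] X := (Submodule.span ℝ D).subtype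

theorem incl_mem_smul_iff {x : DiskSpan D hD h0} {r : ℝ} (hr : r ≠ 0) :
    incl D hD h0 x ∈ r • D ↔ x ∈ r • (incl D hD h0 ⁻¹' D) := by
  rw [mem_smul_set_iff_inv_smul_mem₀ hr, mem_smul_set_iff_inv_smul_mem₀ hr, mem_preimage, map_smul]

theorem absorbent_preimage : Absorbent ℝ (incl D hD h0 ⁻¹' D) := by
  intro x
  obtain ⟨r, hr, hx⟩ := hD.exists_mem_smul_of_mem_span h0 x.2
  refine absorbs_iff_norm.2 ⟨r, fun c hc => singleton_subset_iff.2 ?_⟩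
  have hc0 : c ≠ 0 := norm_pos_iff.1 (hr.trans_le hc)
  refine (incl_mem_smul_iff hc0).1 (hD.1.smul_mono ?_ hx)
  rwa [Real.norm_of_nonneg hr.le]

variable (D hD h0) in
noncomputable def seminorm : Seminorm ℝ (DiskSpan D hD h0) :=
  gaugeSeminorm (hD.1.mulActionHom_preimage (incl D hD h0).toMulActionHom)
    (hD.2.linear_preimage _) absorbent_preimage

noncomputable instance : SeminormedAddCommGroup (DiskSpan D hD h0) :=
  (seminorm D hD h0).toSeminormedAddCommGroup

noncomputable instance : NormedSpace ℝ (DiskSpan D hD h0) :=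
  ⟨fun a x => (map_smul_eq_mul (seminorm D hD h0) a x).le⟩

theorem incl_mem_smul_of_norm_lt {x : DiskSpan D hD h0} {r : ℝ} (hx : ‖x‖ < r) :
    incl D hD h0 x ∈ r • D := by
  obtain ⟨b, hb, hbr, hxb⟩ := exists_lt_of_gauge_lt absorbent_preimage hx
  refine hD.1.smul_mono ?_ ((incl_mem_smul_iff hb.ne').2 hxb)
  rw [Real.norm_of_nonneg hb.le, Real.norm_of_nonneg (hb.trans hbr).le]
  exact hbr.le

theorem norm_le_of_incl_mem_smul {x : DiskSpan D hD h0} {r : ℝ} (hr : 0 < r)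
    (hx : incl D hD h0 x ∈ r • D) : ‖x‖ ≤ r :=
  gauge_le_of_mem hr.le ((incl_mem_smul_iff hr.ne').1 hx)

theorem norm_le_one_of_incl_mem {x : DiskSpan D hD h0} (hx : incl D hD h0 x ∈ D) : ‖x‖ ≤ 1 :=
  norm_le_of_incl_mem_smul one_pos (by rwa [one_smul])

variable [TopologicalSpace X]

theorem continuous_incl {ι : Type*} {p : ι → Seminorm ℝ X} (hp : WithSeminorms p)
    (hDb : IsVonNBounded ℝ D) : Continuous (incl D hD h0) := by
  refine hp.continuous_normedSpace_dom _ _ fun i => ?_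
  obtain ⟨r, hr, hDr⟩ := hp.isVonNBounded_iff_seminorm_bounded.1 hDb i
  refine ⟨r.toNNReal, fun x => ?_⟩
  suffices p i (incl D hD h0 x) / r ≤ ‖x‖ by
    simpa [NNReal.smul_def, Real.coe_toNNReal _ hr.le, div_le_iff₀ hr, mul_comm] using this
  refine le_of_forall_gt_imp_ge_of_dense fun a ha => ?_
  obtain ⟨d, hd, hxd⟩ := incl_mem_smul_of_norm_lt ha
  have ha0 : 0 < a := (norm_nonneg x).trans_lt ha
  rw [div_le_iff₀ hr, ← hxd, map_smul_eq_mul, Real.norm_of_nonneg ha0.le]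
  exact mul_le_mul_of_nonneg_left (hDr d hd).le ha0.le

theorem completeSpace [IsTopologicalAddGroup X] [ContinuousSMul ℝ X] (hX : MackeyComplete X)
    (hDc : IsClosed D) (hDb : IsVonNBounded ℝ D) : CompleteSpace (DiskSpan D hD h0) := by
  set ε : ℕ → ℝ := fun N => 1 / ((N : ℝ) + 1)
  have hε : Tendsto ε atTop (𝓝 0) := tendsto_one_div_add_atTop_nhds_zero_nat
  refine Metric.complete_of_convergent_controlled_sequences ε (fun N => Nat.one_div_pos_of_nat)
    fun u hu => ?_
  have hmem : ∀ N n m, N ≤ n → N ≤ m → incl D hD h0 (u n) - incl D hD h0 (u m) ∈ ε N • D :=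
    fun N n m hn hm => by
      rw [← map_sub]
      exact incl_mem_smul_of_norm_lt (dist_eq_norm (u n) (u m) ▸ hu N n m hn hm)
  have hmin : Tendsto (fun p : ℕ × ℕ => min p.1 p.2) atTop atTop :=
    tendsto_atTop_atTop.2 fun N => ⟨(N, N), fun p hp => le_min hp.1 hp.2⟩
  obtain ⟨l, hl⟩ := hX (fun n => incl D hD h0 (u n))
    ⟨D, fun n m => ε (min n m), hDb, hε.comp hmin,
      fun n m => hmem _ n m (min_le_left n m) (min_le_right n m)⟩
  -- `ε N • D` is closed, so the tail estimates pass to the limit `l`.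
  have hlim : ∀ N n, N ≤ n → incl D hD h0 (u n) - l ∈ ε N • D := fun N n hn =>
    (hDc.smul_of_ne_zero Nat.one_div_pos_of_nat.ne').mem_of_tendsto
      (tendsto_const_nhds.sub hl) (eventually_atTop.2 ⟨N, fun m => hmem N n m hn⟩)
  have hl_span : l ∈ Submodule.span ℝ D := by
    obtain ⟨d, hd, hld⟩ := hlim 0 0 le_rfl
    rw [eq_sub_iff_add_eq, ← eq_sub_iff_add_eq'] at hld
    exact hld ▸ Submodule.sub_mem _ (u 0).2 (Submodule.smul_mem _ _ (Submodule.subset_span hd))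
  let L : DiskSpan D hD h0 := ⟨l, hl_span⟩
  have hL : incl D hD h0 L = l := rfl
  refine ⟨L, Metric.tendsto_atTop.2 fun δ hδ => ?_⟩
  obtain ⟨N, hN⟩ := exists_nat_one_div_lt hδ
  refine ⟨N, fun n hn => dist_eq_norm (u n) L ▸ (?_ : ‖u n - L‖ ≤ ε N).trans_lt hN⟩
  exact norm_le_of_incl_mem_smul Nat.one_div_pos_of_nat (by rw [map_sub, hL]; exact hlim N n hn)

end DiskSpan

end BanachDisk

section UniformBoundedness

variable {X : Type*} [AddCommGroup X] [Module ℝ X] [TopologicalSpace X]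

theorem WithSeminorms.isVonNBounded_closedAbsConvexHull {ι : Type*} {p : ι → Seminorm ℝ X}
    (hp : WithSeminorms p) {B : Set X} (hB : IsVonNBounded ℝ B) :
    IsVonNBounded ℝ (closedAbsConvexHull ℝ B) := by
  rw [hp.isVonNBounded_iff_seminorm_bounded] at hB ⊢
  intro i
  obtain ⟨r, hr, hBr⟩ := hB i
  have hball : IsClosed ((p i).closedBall 0 r) := by
    rw [Seminorm.closedBall_zero_eq]
    exact isClosed_le (hp.continuous_seminorm i) continuous_const
  have hsub : closedAbsConvexHull ℝ B ⊆ (p i).closedBall 0 r :=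
    closedAbsConvexHull_min (fun x hx => (p i).mem_closedBall_zero.2 (hBr x hx).le)
      ⟨(p i).balanced_closedBall_zero r, (p i).convex_closedBall 0 r⟩ hball
  exact ⟨r + 1, by linarith, fun x hx => ((p i).mem_closedBall_zero.1 (hsub hx)).trans_lt
    (lt_add_one r)⟩

theorem MackeyComplete.isVonNBounded_iUnion_image {Y : Type*} [AddCommGroup Y] [Module ℝ Y]
    [TopologicalSpace Y] (hX : MackeyComplete X) {ι ι' κ : Type*} {p : ι → Seminorm ℝ X}
    (hp : WithSeminorms p) {q : ι' → Seminorm ℝ Y} (hq : WithSeminorms q) (f : κ → X →L[ℝ] Y)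
    (hf : ∀ x, IsVonNBounded ℝ (range fun k => f k x)) {B : Set X} (hB : IsVonNBounded ℝ B) :
    IsVonNBounded ℝ (⋃ k, f k '' B) := by
  have := hp.topologicalAddGroup
  have := hp.continuousSMul
  set D := closedAbsConvexHull ℝ (insert 0 B)
  have h0 : (0 : X) ∈ D := subset_closedAbsConvexHull (mem_insert 0 B)
  have hD : AbsConvex ℝ D := absConvex_convexClosedHull
  have hDb : IsVonNBounded ℝ D := hp.isVonNBounded_closedAbsConvexHull (hB.insert 0)
  have := DiskSpan.completeSpace (hD := hD) (h0 := h0) hX isClosed_closedAbsConvexHull hDb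
  have hincl := DiskSpan.continuous_incl (hD := hD) (h0 := h0) hp hDb
  rw [hq.isVonNBounded_iff_seminorm_bddAbove]
  intro j
  let g : κ → Seminorm ℝ (DiskSpan D hD h0) := fun k =>
    (q j).comp ((f k : X →ₗ[ℝ] Y).comp (DiskSpan.incl D hD h0))
  have hg_bdd : BddAbove (range g) := Seminorm.bddAbove_range_iff.2 fun x => by
    have := hq.isVonNBounded_iff_seminorm_bddAbove.1 (hf (DiskSpan.incl D hD h0 x)) j
    rwa [← range_comp] at this
  have hg_cont : Continuous ⇑(⨆ k, g k) := by
    rw [Seminorm.coe_iSup_eq hg_bdd]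
    exact Seminorm.continuous_iSup g
      (fun k => (hq.continuous_seminorm j).comp ((f k).continuous.comp hincl)) hg_bdd
  obtain ⟨C, hC0, hC⟩ := Seminorm.bound_of_continuous_normedSpace _ hg_cont
  refine ⟨C, ?_⟩
  rintro _ ⟨_, hy, rfl⟩
  obtain ⟨k, x, hx, rfl⟩ := mem_iUnion.1 hy
  have hxD : x ∈ D := subset_closedAbsConvexHull (mem_insert_of_mem 0 hx)
  let x' : DiskSpan D hD h0 := ⟨x, Submodule.subset_span hxD⟩
  calc q j (f k x) = g k x' := rfl
    _ ≤ (⨆ k, g k) x' := le_ciSup hg_bdd k x'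
    _ ≤ C * ‖x'‖ := hC x'
    _ ≤ C := mul_le_of_le_one_right hC0.le (DiskSpan.norm_le_one_of_incl_mem hxD)

end UniformBoundedness

section Decay

variable {X : Type*} [AddCommGroup X] [Module ℝ X] [TopologicalSpace X] {ι : Type*}
  {p : ι → Seminorm ℝ X}

theorem WithSeminorms.isVonNBounded_range_smul_of_tendsto (hp : WithSeminorms p) {g : ℝ → X}
    (hg : ContinuousOn g (Ici 0)) {α : ℝ} (hα : 1 ≤ α)
    (h : Tendsto (fun t => t ^ α • g t) atTop (𝓝 0)) :
    IsVonNBounded ℝ (range fun t : Ici (0 : ℝ) => (t : ℝ) • g t) := by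
  have := hp.continuousSMul
  rw [hp.isVonNBounded_iff_seminorm_bddAbove]
  intro i
  have hpi : Tendsto (fun t => p i (t ^ α • g t)) atTop (𝓝 0) :=
    map_zero (p i) ▸ ((hp.continuous_seminorm i).tendsto 0).comp h
  obtain ⟨R, hR⟩ := eventually_atTop.1 (hpi.eventually_le_const one_pos)
  obtain ⟨C, hC⟩ := (isCompact_Icc (a := 0) (b := max R 1)).bddAbove_image
    (f := fun t => p i (t • g t)) <| (hp.continuous_seminorm i).comp_continuousOn <|
      continuousOn_id.smul (hg.mono Icc_subset_Ici_self)
  refine ⟨max C 1, ?_⟩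
  rintro _ ⟨_, ⟨⟨t, ht0⟩, rfl⟩, rfl⟩
  rcases le_total t (max R 1) with htR | hRt
  · exact (hC ⟨t, ⟨ht0, htR⟩, rfl⟩).trans (le_max_left C 1)
  · have ht1 : 1 ≤ t := (le_max_right R 1).trans hRt
    calc p i (t • g t) = t * p i (g t) := by
          rw [map_smul_eq_mul, Real.norm_of_nonneg (zero_le_one.trans ht1)]
      _ ≤ t ^ α * p i (g t) := by gcongr; exact Real.self_le_rpow_of_one_le ht1 hα
      _ = p i (t ^ α • g t) := by
          rw [map_smul_eq_mul, Real.norm_of_nonneg (by positivity)]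
      _ ≤ max C 1 := (hR t ((le_max_left R 1).trans hRt)).trans (le_max_right C 1)

theorem WithSeminorms.eventually_seminorm_smul_le (hp : WithSeminorms p) {S : Set X}
    (hS : IsVonNBounded ℝ S) {c : ℝ → ℝ} (hc : Tendsto c atTop (𝓝 0)) (i : ι) {ε : ℝ}
    (hε : 0 < ε) : ∀ᶠ t in atTop, ∀ y ∈ S, p i (c t • y) ≤ ε := by
  obtain ⟨r, hr, hSr⟩ := hp.isVonNBounded_iff_seminorm_bounded.1 hS i
  have hcr : ∀ᶠ t in atTop, ‖c t‖ ≤ ε / r :=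
    (norm_zero (E := ℝ) ▸ hc.norm).eventually_le_const (div_pos hε hr)
  filter_upwards [hcr] with t ht y hy
  calc p i (c t • y) = ‖c t‖ * p i y := map_smul_eq_mul _ _ _
    _ ≤ ε / r * r := by gcongr; exact (hSr y hy).le
    _ = ε := div_mul_cancel₀ ε hr.ne'

end Decay

theorem rpow_three_halves_smul_eq {X : Type*} [AddCommGroup X] [Module ℝ X] [TopologicalSpace X]
    {T : ℝ → X →L[ℝ] X} (hTsg : ∀ s t : ℝ, 0 ≤ s → 0 ≤ t → T (s + t) = (T s).comp (T t))
    {t : ℝ} (ht : 0 < t) (x : X) :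
    t ^ (3 / 2 : ℝ) • T t x =
      (4 * t ^ (-(1 / 2) : ℝ)) • ((t / 2) • T (t / 2) ((t / 2) • T (t / 2) x)) := by
  have hT : T t x = T (t / 2) (T (t / 2) x) := by
    rw [← ContinuousLinearMap.comp_apply, ← hTsg _ _ (by positivity) (by positivity), add_halves]
  have hpow : t ^ (3 / 2 : ℝ) = t ^ (-(1 / 2) : ℝ) * t ^ (2 : ℝ) := by
    rw [← Real.rpow_add ht]; norm_num
  rw [map_smul, smul_smul, smul_smul, ← hT, hpow, Real.rpow_two]
  congr 1
  ring

theorem statement5_general {X : Type*} [AddCommGroup X] [Module ℝ X] [TopologicalSpace X]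
    (hX : MackeyComplete X)
    {ι : Type*} (Γ : ι → Seminorm ℝ X) (hΓ : WithSeminorms Γ)
    (T : ℝ → X →L[ℝ] X)
    (hTsg : ∀ s t : ℝ, 0 ≤ s → 0 ≤ t → T (s + t) = (T s).comp (T t))
    (hTc : ∀ x : X, ContinuousOn (fun t : ℝ => T t x) (Set.Ici 0)) :
    (∀ x : X, ∃ α > (1:ℝ),
        Tendsto (fun t : ℝ => (t ^ α : ℝ) • T t x) atTop (nhds 0)) ↔
    (∀ B : Set X, IsVonNBounded ℝ B → ∃ α > (1:ℝ), ∀ i : ι, ∀ ε > (0:ℝ),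
        ∃ t₀ : ℝ, ∀ t ≥ t₀, ∀ x ∈ B, Γ i ((t ^ α : ℝ) • T t x) ≤ ε) := by
  have := hΓ.continuousSMul
  constructor
  · intro hdecay B hB
    let F : Ici (0 : ℝ) → X →L[ℝ] X := fun s => (s : ℝ) • T s
    have hF : ∀ x, IsVonNBounded ℝ (range fun s => F s x) := fun x => by
      obtain ⟨α, hα, hx⟩ := hdecay x
      exact hΓ.isVonNBounded_range_smul_of_tendsto (hTc x) hα.le hx
    have hFFB := hX.isVonNBounded_iUnion_image hΓ hΓ F hF
      (hX.isVonNBounded_iUnion_image hΓ hΓ F hF hB)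
    have hc : Tendsto (fun t : ℝ => 4 * t ^ (-(1 / 2) : ℝ)) atTop (𝓝 0) := by
      simpa using (tendsto_rpow_neg_atTop (by norm_num : (0 : ℝ) < 1 / 2)).const_mul 4
    refine ⟨3 / 2, by norm_num, fun i ε hε => ?_⟩
    obtain ⟨t₀, ht₀⟩ := eventually_atTop.1
      ((hΓ.eventually_seminorm_smul_le hFFB hc i hε).and (eventually_gt_atTop 0))
    refine ⟨t₀, fun t ht x hx => ?_⟩
    obtain ⟨hle, htpos⟩ := ht₀ t ht
    let s : Ici (0 : ℝ) := ⟨t / 2, (half_pos htpos).le⟩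
    rw [rpow_three_halves_smul_eq hTsg htpos x]
    exact hle _ (mem_iUnion.2 ⟨s, mem_image_of_mem _ (mem_iUnion.2 ⟨s, mem_image_of_mem _ hx⟩)⟩)
  · intro hunif x
    obtain ⟨α, hα, hx⟩ := hunif {x} (isVonNBounded_singleton x)
    refine ⟨α, hα, hΓ.tendsto_nhds _ 0 |>.2 fun i ε hε => ?_⟩
    obtain ⟨t₀, ht₀⟩ := hx i (ε / 2) (half_pos hε)
    filter_upwards [eventually_ge_atTop t₀] with t ht
    rw [sub_zero]
    exact (ht₀ t ht x rfl).trans_lt (half_lt_self hε)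

/-- For a Mackey complete Hausdorff locally convex space `X` and an exponentially
bounded `C₀`-semigroup on `X`, the pointwise polynomial decay (vi) is equivalent to polynomial
decay uniformly on each bounded set (vii). -/
theorem statement5 {X : Type*} [AddCommGroup X] [Module ℝ X] [TopologicalSpace X]
    [T2Space X] (hX : MackeyComplete X)
    {ι : Type*} [Nonempty ι] (Γ : ι → Seminorm ℝ X) (hΓ : WithSeminorms Γ)
    (T : ℝ → X →L[ℝ] X)
    (hT0 : T 0 = ContinuousLinearMap.id ℝ X)
    (hTsg : ∀ s t : ℝ, 0 ≤ s → 0 ≤ t → T (s + t) = (T s).comp (T t))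
    (hTc : ∀ x : X, ContinuousOn (fun t : ℝ => T t x) (Set.Ici 0))
    (hexp : ∀ i : ι, ∃ j : ι, ∃ M : ℝ, 1 ≤ M ∧ ∃ ω : ℝ,
      ∀ t : ℝ, 0 ≤ t → ∀ x : X, Γ i (T t x) ≤ M * Real.exp (ω * t) * Γ j x) :
    (∀ x : X, ∃ α > (1:ℝ),
        Tendsto (fun t : ℝ => (t ^ α : ℝ) • T t x) atTop (nhds 0)) ↔
    (∀ B : Set X, IsVonNBounded ℝ B → ∃ α > (1:ℝ), ∀ i : ι, ∀ ε > (0:ℝ),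
        ∃ t₀ : ℝ, ∀ t ≥ t₀, ∀ x ∈ B, Γ i ((t ^ α : ℝ) • T t x) ≤ ε) :=
  statement5_general hX Γ hΓ T hTsg hTc
end

section
/- Let X be a Hausdorff locally convex space whose topology is induced by a family Γ_X of continuous seminorms, assume X is a Baire space, and let (T(t))_{t≥0} be an exponentially bounded C₀-semigroup on X. If for every x ∈ X there exists α > 1 such that t^α T(t)x → 0 in X as t → ∞, then there exists a single α > 1 such that t^α T(t)x → 0 as t → ∞ for every x ∈ X. -/
/-!
Continuity on `[0, ∞)` together with decay of order `t^α`, `α ≥ 1`, shows that every orbit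
satisfies `sup_t (1 + t) q(T(t)x) < ∞` for each continuous seminorm `q`. A Baire locally convex
space is barrelled, so the uniform boundedness principle upgrades this to
`(1 + t) q(T(t)y) ≤ p(y)` for a continuous seminorm `p`. Writing `T(2t) = T(t)T(t)` and applying
the orbit bound to `p` gives `(1 + t)² q(T(2t)x) ≤ S`, i.e. quadratic decay of every orbit, so
`α = 3/2` works uniformly.
-/

open Filter Topology Set
open scoped NNReal

section

variable {E : Type*} [AddCommGroup E] [Module ℝ E]

theorem tendsto_seminorm_rpow_smul_of_rpow_mul_le {f : ℝ → E} (q : Seminorm ℝ E)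
    {α β D : ℝ} (hαβ : α < β) (hf : ∀ t, 0 ≤ t → t ^ β * q (f t) ≤ D) :
    Tendsto (fun t : ℝ => q (t ^ α • f t)) atTop (𝓝 0) := by
  refine squeeze_zero' (Eventually.of_forall fun t => apply_nonneg _ _)
    (g := fun t => D * t ^ (-(β - α))) ?_ ?_
  · filter_upwards [eventually_gt_atTop 0] with t ht
    rw [map_smul_eq_mul, Real.norm_eq_abs, abs_of_nonneg (Real.rpow_nonneg ht.le _)]
    calc t ^ α * q (f t) = t ^ (-(β - α)) * (t ^ β * q (f t)) := by
          rw [← mul_assoc, ← Real.rpow_add ht]; ring_nf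
      _ ≤ t ^ (-(β - α)) * D := by gcongr; exact hf t ht.le
      _ = D * t ^ (-(β - α)) := mul_comm _ _
  · simpa using (tendsto_rpow_neg_atTop (sub_pos.2 hαβ)).const_mul D

variable [TopologicalSpace E]

theorem exists_one_add_mul_seminorm_le_of_tendsto_rpow_smul {f : ℝ → E} {q : Seminorm ℝ E}
    (hq : Continuous q) (hf : ContinuousOn f (Ici 0)) {α : ℝ} (hα : 1 ≤ α)
    (hlim : Tendsto (fun t : ℝ => t ^ α • f t) atTop (𝓝 0)) :
    ∃ S, ∀ t, 0 ≤ t → (1 + t) * q (f t) ≤ S := by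
  have hq_lim : Tendsto (fun t : ℝ => q (t ^ α • f t)) atTop (𝓝 0) := by
    simpa only [Function.comp_def, map_zero] using (hq.tendsto 0).comp hlim
  obtain ⟨a, ha⟩ := eventually_atTop.1 (hq_lim.eventually_lt_const one_pos)
  set b := max a 1
  obtain ⟨B, hB⟩ : BddAbove ((fun t => (1 + t) * q (f t)) '' Icc 0 b) :=
    (isCompact_Icc.image_of_continuousOn <| (continuousOn_const.add continuousOn_id).mul <|
      hq.comp_continuousOn (hf.mono Icc_subset_Ici_self)).bddAbove
  refine ⟨max B 2, fun t ht => ?_⟩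
  rcases le_or_gt t b with htb | hbt
  · exact (hB ⟨t, ⟨ht, htb⟩, rfl⟩).trans (le_max_left _ _)
  have ht1 : 1 ≤ t := (le_max_right a 1).trans hbt.le
  have hdecay : t ^ α * q (f t) < 1 := by
    simpa only [map_smul_eq_mul, Real.norm_eq_abs,
      abs_of_nonneg (Real.rpow_nonneg ht _)] using ha t ((le_max_left a 1).trans hbt.le)
  have htα : t ≤ t ^ α := by
    simpa only [Real.rpow_one] using Real.rpow_le_rpow_of_exponent_le ht1 hα
  have hqf : 0 ≤ q (f t) := apply_nonneg _ _
  calc (1 + t) * q (f t) ≤ 2 * (t ^ α * q (f t)) := by nlinarith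
    _ ≤ max B 2 := by linarith [le_max_right B 2]

theorem exists_continuous_seminorm_one_add_mul_le [BarrelledSpace ℝ E]
    (T : ℝ → E →L[ℝ] E) {q : Seminorm ℝ E} (hq : Continuous q)
    (H : ∀ x, ∃ S, ∀ t, 0 ≤ t → (1 + t) * q (T t x) ≤ S) :
    ∃ p : Seminorm ℝ E, Continuous p ∧ ∀ x t, 0 ≤ t → (1 + t) * q (T t x) ≤ p x := by
  set P : ℝ≥0 → Seminorm ℝ E := fun t => (1 + t) • q.comp (T t).toLinearMap
  have hP : ∀ (t : ℝ≥0) x, P t x = (1 + t) * q (T t x) := fun _ _ => rfl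
  have hbdd : BddAbove (range P) := by
    refine Seminorm.bddAbove_range_iff.2 fun x => ?_
    obtain ⟨S, hS⟩ := H x
    exact ⟨S, forall_mem_range.2 fun t => (hP t x).trans_le (hS t t.2)⟩
  have hPc : ∀ t, Continuous (P t) := fun t => (hq.comp (T t).continuous).const_smul _
  refine ⟨⨆ t, P t, ?_, fun x t ht => ?_⟩
  · simpa only [Seminorm.coe_iSup_eq hbdd] using Seminorm.continuous_iSup P hPc hbdd
  · exact (hP ⟨t, ht⟩ x).symm.trans_le (Seminorm.le_def.1 (le_ciSup hbdd ⟨t, ht⟩) x)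

theorem sq_mul_seminorm_le_of_semigroup (T : ℝ → E →L[ℝ] E)
    (hTsg : ∀ s t : ℝ, 0 ≤ s → 0 ≤ t → T (s + t) = (T s).comp (T t))
    {q p : Seminorm ℝ E} (hqp : ∀ y t, 0 ≤ t → (1 + t) * q (T t y) ≤ p y)
    {x : E} {S : ℝ} (hS : ∀ t, 0 ≤ t → (1 + t) * p (T t x) ≤ S) {u : ℝ} (hu : 0 ≤ u) :
    u ^ 2 * q (T u x) ≤ 4 * S := by
  set s := u / 2 with hs_def
  have hs : 0 ≤ s := by positivity
  have hsplit : T u x = T s (T s x) := by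
    rw [show u = s + s by ring, hTsg s s hs hs, ContinuousLinearMap.comp_apply]
  calc u ^ 2 * q (T u x) ≤ (2 * (1 + s)) ^ 2 * q (T u x) := by gcongr; linarith [hs_def]
    _ = 4 * ((1 + s) * ((1 + s) * q (T s (T s x)))) := by rw [hsplit]; ring
    _ ≤ 4 * ((1 + s) * p (T s x)) := by gcongr; exact hqp _ s hs
    _ ≤ 4 * S := by gcongr; exact hS s hs

end

theorem statement6_general {X : Type*} [AddCommGroup X] [Module ℝ X] [TopologicalSpace X]
    [BaireSpace X]
    {ι : Type*} (Γ : ι → Seminorm ℝ X) (hΓ : WithSeminorms Γ)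
    (T : ℝ → X →L[ℝ] X)
    (hTsg : ∀ s t : ℝ, 0 ≤ s → 0 ≤ t → T (s + t) = (T s).comp (T t))
    (hTc : ∀ x : X, ContinuousOn (fun t : ℝ => T t x) (Set.Ici 0))
    (h : ∀ x : X, ∃ α > (1:ℝ),
      Tendsto (fun t : ℝ => (t ^ α : ℝ) • T t x) atTop (nhds 0)) :
    ∃ α > (1:ℝ), ∀ x : X,
      Tendsto (fun t : ℝ => (t ^ α : ℝ) • T t x) atTop (nhds 0) := by
  have := hΓ.topologicalAddGroup
  have := hΓ.continuousSMul
  have horbit : ∀ q : Seminorm ℝ X, Continuous q →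
      ∀ x, ∃ S, ∀ t, 0 ≤ t → (1 + t) * q (T t x) ≤ S := fun q hq x => by
    obtain ⟨α, hα, hlim⟩ := h x
    exact exists_one_add_mul_seminorm_le_of_tendsto_rpow_smul hq (hTc x) hα.le hlim
  refine ⟨3 / 2, by norm_num, fun x => (hΓ.tendsto_nhds _ 0).2 fun i ε hε => ?_⟩
  obtain ⟨p, hp, hqp⟩ := exists_continuous_seminorm_one_add_mul_le T
    (hΓ.continuous_seminorm i) (horbit _ (hΓ.continuous_seminorm i))
  obtain ⟨S, hS⟩ := horbit p hp x
  have hdecay := tendsto_seminorm_rpow_smul_of_rpow_mul_le (Γ i) (α := 3 / 2) (β := 2)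
    (by norm_num) fun t ht => by
      simpa only [Real.rpow_two] using sq_mul_seminorm_le_of_semigroup T hTsg hqp hS ht
  simpa only [sub_zero] using hdecay.eventually_lt_const hε

/-- For a Hausdorff locally convex Baire space `X` and an exponentially bounded
`C₀`-semigroup on `X`: if every orbit decays faster than some polynomial rate `t^α` (`α > 1`
depending on the point), then one single `α > 1` works for all points. -/
theorem statement6 {X : Type*} [AddCommGroup X] [Module ℝ X] [TopologicalSpace X]
    [T2Space X] [BaireSpace X]
    {ι : Type*} [Nonempty ι] (Γ : ι → Seminorm ℝ X) (hΓ : WithSeminorms Γ)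
    (T : ℝ → X →L[ℝ] X)
    (hT0 : T 0 = ContinuousLinearMap.id ℝ X)
    (hTsg : ∀ s t : ℝ, 0 ≤ s → 0 ≤ t → T (s + t) = (T s).comp (T t))
    (hTc : ∀ x : X, ContinuousOn (fun t : ℝ => T t x) (Set.Ici 0))
    (hexp : ∀ i : ι, ∃ j : ι, ∃ M : ℝ, 1 ≤ M ∧ ∃ ω : ℝ,
      ∀ t : ℝ, 0 ≤ t → ∀ x : X, Γ i (T t x) ≤ M * Real.exp (ω * t) * Γ j x)
    (h : ∀ x : X, ∃ α > (1:ℝ),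
      Tendsto (fun t : ℝ => (t ^ α : ℝ) • T t x) atTop (nhds 0)) :
    ∃ α > (1:ℝ), ∀ x : X,
      Tendsto (fun t : ℝ => (t ^ α : ℝ) • T t x) atTop (nhds 0) :=
  statement6_general Γ hΓ T hTsg hTc h
end

section
/- Let X be a Mackey complete Hausdorff locally convex space whose topology is induced by a family Γ_X of continuous seminorms, and let (T(t))_{t≥0} be a C₀-semigroup on X. Then the following are equivalent: (i) for every q ∈ Γ_X there exists ω > 0 such that for every bounded set B ⊆ X one has lim_{t→∞} sup_{x∈B} q(e^{ωt} T(t)x) = 0 (pseudo uniform exponential stability); (ii) for every q ∈ Γ_X there exists ω > 0 such that for every x ∈ X one has lim_{t→∞} q(e^{ωt} T(t)x) = 0. -/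
/-!
Condition (i) gives (ii) by taking `B = {x}`. Conversely, continuity and decay make every orbit
`t ↦ q (e^{ωt} T(t) x)` bounded on `[0, ∞)`. A Banach–Steinhaus theorem for Mackey complete
spaces, proved by a gliding hump whose partial sums form a Mackey Cauchy sequence, upgrades this to
a bound uniform over every bounded set, and halving `ω` turns the uniform bound into uniform decay.
-/

open Filter Topology Bornology Pointwise

lemma exists_forall_ge_le_of_continuousOn_Ici_of_tendsto {f : ℝ → ℝ} {a l : ℝ}
    (hf : ContinuousOn f (Set.Ici a)) (hlim : Tendsto f atTop (𝓝 l)) :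
    ∃ M, ∀ t ≥ a, f t ≤ M := by
  obtain ⟨t₀, ht₀⟩ := eventually_atTop.1 (hlim.eventually (eventually_le_nhds (lt_add_one l)))
  obtain ⟨M, hM⟩ :=
    isCompact_Icc.bddAbove_image (hf.mono (Set.Icc_subset_Ici_self : Set.Icc a t₀ ⊆ _))
  refine ⟨max M (l + 1), fun t ht => ?_⟩
  rcases le_total t t₀ with htt₀ | ht₀t
  · exact (hM ⟨t, ⟨ht, htt₀⟩, rfl⟩).trans (le_max_left _ _)
  · exact (ht₀ t ht₀t).trans (le_max_right _ _)

lemma tendsto_zero_of_two_mul_succ_le {c : ℕ → ℝ} (hc : ∀ n, 0 ≤ c n)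
    (hhalf : ∀ n, 2 * c (n + 1) ≤ c n) : Tendsto c atTop (𝓝 0) := by
  have hgeom : ∀ n, c n ≤ c 0 * 2⁻¹ ^ n := by
    intro n
    induction n with
    | zero => simp
    | succ n ih => rw [pow_succ]; linarith [hhalf n]
  have hlim : Tendsto (fun n => c 0 * (2⁻¹ : ℝ) ^ n) atTop (𝓝 0) := by
    simpa using (tendsto_pow_atTop_nhds_zero_of_lt_one (r := (2⁻¹ : ℝ)) (by norm_num)
      (by norm_num)).const_mul (c 0)
  exact squeeze_zero hc hgeom hlim

lemma exists_forall_ge_exp_neg_mul_le {ω : ℝ} (hω : 0 < ω) (M : ℝ) {ε : ℝ} (hε : 0 < ε) :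
    ∃ t₀, ∀ t ≥ t₀, 0 ≤ t ∧ Real.exp (-(ω * t)) * M ≤ ε := by
  have hdecay : Tendsto (fun t => Real.exp (-(ω * t)) * M) atTop (𝓝 0) := by
    simpa using (Real.tendsto_exp_neg_atTop_nhds_zero.comp
      (tendsto_id.const_mul_atTop hω)).mul_const M
  exact eventually_atTop.1 ((eventually_ge_atTop 0).and (hdecay.eventually (ge_mem_nhds hε)))


namespace Seminorm

variable {X : Type*} [AddCommGroup X] [Module ℝ X]

lemma exists_bound_of_isVonNBounded [TopologicalSpace X] {p : Seminorm ℝ X} (hp : Continuous p)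
    {B : Set X} (hB : IsVonNBounded ℝ B) : ∃ r, 0 ≤ r ∧ ∀ x ∈ B, p x ≤ r := by
  obtain ⟨a, ha, hsub⟩ := (hB (p.ball_mem_nhds hp one_pos)).exists_pos
  have hB' := hsub a (by rw [Real.norm_of_nonneg ha.le])
  rw [p.smul_ball_zero ha.ne', Real.norm_of_nonneg ha.le, mul_one] at hB'
  exact ⟨a, ha.le, fun x hx => (p.mem_ball_zero.1 (hB' hx)).le⟩

variable (r : Seminorm ℝ X) {s x : ℕ → X} {c : ℕ → ℝ} {R : ℝ}

lemma map_sub_le_of_two_mul_succ_le (hs : ∀ j, s (j + 1) = s j + c j • x j)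
    (hc : ∀ j, 0 ≤ c j) (hhalf : ∀ j, 2 * c (j + 1) ≤ c j) (hx : ∀ j, r (x j) ≤ R)
    {n m : ℕ} (hnm : n ≤ m) : r (s m - s n) ≤ 2 * (c n - c m) * R := by
  have hR : 0 ≤ R := (apply_nonneg r _).trans (hx 0)
  induction m, hnm using Nat.le_induction with
  | base => simp
  | succ m _ ih =>
    have hstep : r (s (m + 1) - s n) ≤ r (s m - s n) + c m * r (x m) := by
      have := map_add_le_add r (s m - s n) (c m • x m)
      rwa [map_smul_eq_mul, Real.norm_of_nonneg (hc m), ← add_sub_right_comm, ← hs] at this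
    nlinarith [hx m, hhalf m, hc m]

lemma le_map_of_two_mul_succ_le (hs : ∀ j, s (j + 1) = s j + c j • x j)
    (hc : ∀ j, 0 ≤ c j) (hhalf : ∀ j, 2 * c (j + 1) ≤ c j) (hx : ∀ j, r (x j) ≤ R)
    {n m : ℕ} (hnm : n < m) : c n * r (x n) - r (s n) - 2 * c (n + 1) * R ≤ r (s m) := by
  have htail := r.map_sub_le_of_two_mul_succ_le hs hc hhalf hx hnm
  have hsplit : c n • x n = (s m - s n) - (s m - s (n + 1)) := by rw [hs]; abel
  have hhump : c n * r (x n) ≤ r (s m) + r (s n) + r (s m - s (n + 1)) := by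
    rw [← Real.norm_of_nonneg (hc n), ← map_smul_eq_mul, hsplit]
    linarith [map_sub_le_add r (s m - s n) (s m - s (n + 1)), map_sub_le_add r (s m) (s n)]
  nlinarith [hc m, (apply_nonneg r _).trans (hx 0)]

end Seminorm

section

variable {X : Type*} [AddCommGroup X] [Module ℝ X] {I : Type*}

/- Used with `K t` a bound of `p t` on `B` and `P x` a bound of all `p t x`.
The `n`-th state is `(s n, c n)` with `s (n + 1) = s n + c n • x n`, where
`(t n, x n) := hump ((n + 1 + P (s n)) / c n)` is chosen so that `p (t n) (c n • x n)` exceeds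
`n + 1 + P (s n)`. Dividing `c n` by `2 * (1 + K (t n))` keeps the `p (t n)`-size of the tail
`∑_{j > n} c j • x j` below `1`, so that `p (t n)` of the limit is at least `n`. -/
noncomputable def glidingHump (K : I → ℝ) (P : X → ℝ) (hump : ℝ → I × X) : ℕ → X × ℝ
  | 0 => (0, 1)
  | n + 1 =>
    let a := glidingHump K P hump n
    let y := hump ((n + 1 + P a.1) / a.2)
    (a.1 + a.2 • y.2, a.2 / (2 * (1 + K y.1)))

variable {K : I → ℝ} (P : X → ℝ) (hump : ℝ → I × X)

lemma glidingHump_snd_pos (hK : ∀ t, 0 ≤ K t) (n : ℕ) : 0 < (glidingHump K P hump n).2 := by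
  induction n with
  | zero => exact one_pos
  | succ n ih =>
    exact div_pos ih (mul_pos two_pos (add_pos_of_pos_of_nonneg one_pos (hK _)))

lemma two_mul_glidingHump_snd_succ_le (hK : ∀ t, 0 ≤ K t) (n : ℕ) :
    2 * (glidingHump K P hump (n + 1)).2 ≤ (glidingHump K P hump n).2 := by
  dsimp only [glidingHump]
  rw [mul_div_assoc', mul_div_mul_left _ _ two_ne_zero]
  exact div_le_self (glidingHump_snd_pos P hump hK n).le (le_add_of_nonneg_right (hK _))

lemma glidingHump_snd_le_one (hK : ∀ t, 0 ≤ K t) (n : ℕ) : (glidingHump K P hump n).2 ≤ 1 := by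
  induction n with
  | zero => exact le_rfl
  | succ n ih =>
    linarith [two_mul_glidingHump_snd_succ_le P hump hK n, glidingHump_snd_pos P hump hK (n + 1)]

variable [TopologicalSpace X]

lemma MackeyComplete.exists_tendsto_of_two_mul_succ_le (hX : MackeyComplete X) {ι : Type*}
    {q : SeminormFamily ℝ X ι} (hq : WithSeminorms q) {B : Set X} (hB : IsVonNBounded ℝ B)
    {s x : ℕ → X} {c : ℕ → ℝ} (hs : ∀ j, s (j + 1) = s j + c j • x j) (hc : ∀ j, 0 < c j)
    (hhalf : ∀ j, 2 * c (j + 1) ≤ c j) (hxB : ∀ j, x j ∈ B) :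
    ∃ z, Tendsto s atTop (𝓝 z) := by
  choose R hRpos hR using hq.isVonNBounded_iff_seminorm_bounded.1 hB
  have hdiff : ∀ k n m, q k (s n - s m) ≤ 2 * (c n + c m) * R k := by
    intro k n m
    have hx : ∀ j, q k (x j) ≤ R k := fun j => (hR k _ (hxB j)).le
    have hRk := (hRpos k).le
    rcases le_total m n with hmn | hnm
    · have := (q k).map_sub_le_of_two_mul_succ_le hs (fun j => (hc j).le) hhalf hx hmn
      nlinarith [hc n]
    · have := (q k).map_sub_le_of_two_mul_succ_le hs (fun j => (hc j).le) hhalf hx hnm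
      rw [map_sub_rev]
      nlinarith [hc m]
  refine hX s ⟨{y | ∀ k, q k y ≤ R k}, fun n m => 2 * (c n + c m), ?_, ?_, fun n m => ?_⟩
  · exact hq.isVonNBounded_iff_seminorm_bounded.2 fun k =>
      ⟨R k + 1, by linarith [hRpos k], fun y hy => by linarith [hy k]⟩
  · have hc0 := tendsto_zero_of_two_mul_succ_le (fun j => (hc j).le) hhalf
    simpa [prod_atTop_atTop_eq] using
      ((hc0.comp tendsto_fst).add (hc0.comp tendsto_snd)).const_mul 2
  · have hb : 0 < 2 * (c n + c m) := by linarith [hc n, hc m]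
    rw [Set.mem_smul_set_iff_inv_smul_mem₀ hb.ne']
    intro k
    rw [map_smul_eq_mul, norm_inv, Real.norm_of_nonneg hb.le, inv_mul_le_iff₀ hb]
    exact hdiff k n m

theorem MackeyComplete.exists_bound_of_forall_exists_bound (hX : MackeyComplete X) {ι : Type*}
    {q : SeminormFamily ℝ X ι} (hq : WithSeminorms q) (p : I → Seminorm ℝ X)
    (hp : ∀ t, Continuous (p t)) (hbdd : ∀ x, ∃ M, ∀ t, p t x ≤ M) {B : Set X}
    (hB : IsVonNBounded ℝ B) : ∃ M, ∀ t, ∀ x ∈ B, p t x ≤ M := by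
  by_contra! hunb
  choose P hP using hbdd
  choose K hK0 hK using fun t => Seminorm.exists_bound_of_isVonNBounded (hp t) hB
  choose τ ξ hξB hξ using hunb
  let hump : ℝ → I × X := fun M => (τ M, ξ M)
  let s : ℕ → X := fun n => (glidingHump K P hump n).1
  let c : ℕ → ℝ := fun n => (glidingHump K P hump n).2
  let M : ℕ → ℝ := fun n => (n + 1 + P (s n)) / c n
  have hs : ∀ n, s (n + 1) = s n + c n • ξ (M n) := fun n => rfl
  have hc : ∀ n, 0 < c n := glidingHump_snd_pos P hump hK0
  have hhalf : ∀ n, 2 * c (n + 1) ≤ c n := two_mul_glidingHump_snd_succ_le P hump hK0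
  obtain ⟨z, hz⟩ := hX.exists_tendsto_of_two_mul_succ_le hq hB hs hc hhalf fun n => hξB _
  have hlarge : ∀ n : ℕ, (n : ℝ) ≤ p (τ (M n)) z := by
    intro n
    refine ge_of_tendsto (((hp _).tendsto z).comp hz) (eventually_atTop.2 ⟨n + 1, fun m hm => ?_⟩)
    have hhump := (p (τ (M n))).le_map_of_two_mul_succ_le hs (fun j => (hc j).le) hhalf
      (fun j => hK _ _ (hξB _)) hm
    have hbig : n + 1 + P (s n) < c n * p (τ (M n)) (ξ (M n)) := (div_lt_iff₀' (hc n)).1 (hξ _)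
    have htail : 2 * c (n + 1) * K (τ (M n)) ≤ 1 := by
      have hcsucc : c (n + 1) = c n / (2 * (1 + K (τ (M n)))) := rfl
      have := hK0 (τ (M n))
      calc 2 * c (n + 1) * K (τ (M n)) = c n * K (τ (M n)) / (1 + K (τ (M n))) := by
            rw [hcsucc]; field_simp
        _ ≤ 1 := by
          rw [div_le_one (by positivity)]
          nlinarith [glidingHump_snd_le_one P hump hK0 n]
    show (n : ℝ) ≤ p (τ (M n)) (s m)
    linarith [hP (s n) (τ (M n))]
  obtain ⟨n, hn⟩ := exists_nat_gt (P z)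
  linarith [hP z (τ (M n)), hlarge n]

lemma MackeyComplete.exists_bound_exp_smul_of_tendsto (hX : MackeyComplete X) {ι : Type*}
    {q : SeminormFamily ℝ X ι} (hq : WithSeminorms q) {r : Seminorm ℝ X} (hr : Continuous r)
    {T : ℝ → X →L[ℝ] X} (hTc : ∀ x, ContinuousOn (fun t => T t x) (Set.Ici 0)) {ω : ℝ}
    (hlim : ∀ x, Tendsto (fun t => r (Real.exp (ω * t) • T t x)) atTop (𝓝 0)) {B : Set X}
    (hB : IsVonNBounded ℝ B) : ∃ M, ∀ t ≥ 0, ∀ x ∈ B, r (Real.exp (ω * t) • T t x) ≤ M := by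
  have := hq.continuousSMul
  let p : Set.Ici (0 : ℝ) → Seminorm ℝ X :=
    fun t => r.comp (Real.exp (ω * t) • (T t : X →ₗ[ℝ] X))
  have hp : ∀ t, Continuous (p t) := fun t => hr.comp ((T t).continuous.const_smul _)
  have horbit : ∀ x, ∃ M, ∀ t, p t x ≤ M := fun x => by
    obtain ⟨M, hM⟩ := exists_forall_ge_le_of_continuousOn_Ici_of_tendsto (hr.comp_continuousOn
      ((Real.continuous_exp.comp (continuous_const_mul ω)).continuousOn.smul (hTc x))) (hlim x)
    exact ⟨M, fun t => hM t t.2⟩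
  obtain ⟨M, hM⟩ := hX.exists_bound_of_forall_exists_bound hq p hp horbit hB
  exact ⟨M, fun t ht x hx => hM ⟨t, ht⟩ x hx⟩

end

theorem statement7_general {X : Type*} [AddCommGroup X] [Module ℝ X] [TopologicalSpace X]
    (hX : MackeyComplete X)
    {ι : Type*} (Γ : ι → Seminorm ℝ X) (hΓ : WithSeminorms Γ)
    (T : ℝ → X →L[ℝ] X)
    (hTc : ∀ x : X, ContinuousOn (fun t : ℝ => T t x) (Set.Ici 0)) :
    (∀ i : ι, ∃ ω > (0:ℝ), ∀ B : Set X, IsVonNBounded ℝ B → ∀ ε > (0:ℝ),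
        ∃ t₀ : ℝ, ∀ t ≥ t₀, ∀ x ∈ B, Γ i (Real.exp (ω * t) • T t x) ≤ ε) ↔
    (∀ i : ι, ∃ ω > (0:ℝ), ∀ x : X,
        Tendsto (fun t : ℝ => Γ i (Real.exp (ω * t) • T t x)) atTop (nhds 0)) := by
  have := hΓ.continuousSMul
  refine ⟨fun h i => ?_, fun h i => ?_⟩
  · obtain ⟨ω, hω, hunif⟩ := h i
    refine ⟨ω, hω, fun x => tendsto_order.2 ⟨fun a ha => .of_forall fun t =>
      ha.trans_le (apply_nonneg _ _), fun a ha => ?_⟩⟩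
    obtain ⟨t₀, ht₀⟩ := hunif {x} (isVonNBounded_singleton x) (a / 2) (half_pos ha)
    exact eventually_atTop.2 ⟨t₀, fun t ht => (ht₀ t ht x rfl).trans_lt (half_lt_self ha)⟩
  · obtain ⟨ω, hω, hlim⟩ := h i
    refine ⟨ω / 2, half_pos hω, fun B hB ε hε => ?_⟩
    obtain ⟨M, hM⟩ := hX.exists_bound_exp_smul_of_tendsto hΓ (hΓ.continuous_seminorm i) hTc hlim hB
    obtain ⟨t₀, ht₀⟩ := exists_forall_ge_exp_neg_mul_le (half_pos hω) M hε
    refine ⟨t₀, fun t ht x hx => ?_⟩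
    obtain ⟨ht0, hle⟩ := ht₀ t ht
    have hexp : Real.exp (ω / 2 * t) = Real.exp (-(ω / 2 * t)) * Real.exp (ω * t) := by
      rw [← Real.exp_add]; ring_nf
    calc Γ i (Real.exp (ω / 2 * t) • T t x)
        = Real.exp (-(ω / 2 * t)) * Γ i (Real.exp (ω * t) • T t x) := by
          rw [hexp, mul_smul, map_smul_eq_mul, Real.norm_of_nonneg (Real.exp_pos _).le]
      _ ≤ Real.exp (-(ω / 2 * t)) * M := by gcongr; exact hM t ht0 x hx
      _ ≤ ε := hle

/-- For a Mackey complete Hausdorff locally convex space `X` and a `C₀`-semigroup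
on `X`, pseudo uniform exponential stability (i) is equivalent to condition (ii). -/
theorem statement7 {X : Type*} [AddCommGroup X] [Module ℝ X] [TopologicalSpace X]
    [T2Space X] (hX : MackeyComplete X)
    {ι : Type*} [Nonempty ι] (Γ : ι → Seminorm ℝ X) (hΓ : WithSeminorms Γ)
    (T : ℝ → X →L[ℝ] X)
    (hT0 : T 0 = ContinuousLinearMap.id ℝ X)
    (hTsg : ∀ s t : ℝ, 0 ≤ s → 0 ≤ t → T (s + t) = (T s).comp (T t))
    (hTc : ∀ x : X, ContinuousOn (fun t : ℝ => T t x) (Set.Ici 0)) :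
    (∀ i : ι, ∃ ω > (0:ℝ), ∀ B : Set X, IsVonNBounded ℝ B → ∀ ε > (0:ℝ),
        ∃ t₀ : ℝ, ∀ t ≥ t₀, ∀ x ∈ B, Γ i (Real.exp (ω * t) • T t x) ≤ ε) ↔
    (∀ i : ι, ∃ ω > (0:ℝ), ∀ x : X,
        Tendsto (fun t : ℝ => Γ i (Real.exp (ω * t) • T t x)) atTop (nhds 0)) :=
  statement7_general hX Γ hΓ T hTc
end

section
/- Let X be a Mackey complete Hausdorff locally convex space whose topology is induced by a family Γ_X of continuous seminorms, and let (T(t))_{t≥0} be a C₀-semigroup on X. Then the following are equivalent: (iii) for every q ∈ Γ_X and every x ∈ X there exists ω > 0 such that lim_{t→∞} q(e^{ωt} T(t)x) = 0 (pseudo strong exponential stability); (iv) for every q ∈ Γ_X and every bounded set B ⊆ X there exists ω > 0 such that lim_{t→∞} sup_{x∈B} q(e^{ωt} T(t)x) = 0. -/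
/-!
(iv) gives (iii) by taking `B = {x}`. Conversely, suppose (iii) holds but (iv) fails for `q`
and `B`; then for every rate `ω > 0` the orbits `e^{ωt} T(t) x`, `x ∈ B`, are unbounded in `q`
along times `t → ∞`. A gliding hump builds `z = ∑ cₙ xₙ` with `xₙ ∈ B`: given the partial sum
`sₙ`, take a rate `rₙ ≤ 1/(n+1)` below the decay rate of `sₙ` and a time `tₙ ≥ n` at which
`pₙ = q (e^{rₙ tₙ} T(tₙ) ·)` is at most `1` on `sₙ` but at least `4` on `cₙ xₙ`; the later
coefficients decrease geometrically and are so small that their terms add at most `1` under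
`pₙ`. By Mackey completeness the series converges, and `pₙ z ≥ 2` for every `n`. Since
`rₙ → 0` and `tₙ → ∞`, this contradicts the exponential decay of `z` granted by (iii).
-/

open Filter Topology Bornology Pointwise

open Real Finset

section SeminormLemmas

variable {X : Type*} [AddCommGroup X] [Module ℝ X]

lemma Seminorm.map_exp_smul (q : Seminorm ℝ X) (a : ℝ) (y : X) :
    q (exp a • y) = exp a * q y := by
  simp only [map_smul_eq_mul, Real.norm_eq_abs, Real.abs_exp]

lemma Seminorm.map_exp_mul_smul_mono (q : Seminorm ℝ X) {a b t : ℝ} (hab : a ≤ b) (ht : 0 ≤ t)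
    (y : X) : q (exp (a * t) • y) ≤ q (exp (b * t) • y) := by
  rw [q.map_exp_smul, q.map_exp_smul]
  gcongr

lemma Seminorm.map_sum_smul_le {α : Type*} (q : Seminorm ℝ X) (s : Finset α) {a : α → ℝ}
    {y : α → X} {K : ℝ} (ha : ∀ j ∈ s, 0 ≤ a j) (hy : ∀ j ∈ s, q (y j) ≤ K) :
    q (∑ j ∈ s, a j • y j) ≤ (∑ j ∈ s, a j) * K := by
  calc q (∑ j ∈ s, a j • y j)
      ≤ ∑ j ∈ s, q (a j • y j) :=
        Finset.le_sum_of_subadditive q (map_zero q).le (map_add_le_add q) _ _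
    _ ≤ ∑ j ∈ s, a j * K := by
      refine sum_le_sum fun j hj => ?_
      rw [map_smul_eq_mul, Real.norm_of_nonneg (ha j hj)]
      exact mul_le_mul_of_nonneg_left (hy j hj) (ha j hj)
    _ = (∑ j ∈ s, a j) * K := (sum_mul ..).symm

end SeminormLemmas

lemma sum_Ico_le_two_mul_of_le_half {c : ℕ → ℝ} (hc0 : ∀ n, 0 ≤ c n)
    (hc : ∀ n, c (n + 1) ≤ c n / 2) {m M : ℕ} (hmM : m ≤ M) :
    ∑ j ∈ Ico m M, c j ≤ 2 * c m := by
  suffices ∑ j ∈ Ico m M, c j + 2 * c M ≤ 2 * c m by linarith [hc0 M]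
  induction M, hmM using Nat.le_induction with
  | base => simp
  | succ M hmM ih =>
    rw [sum_Ico_succ_top hmM]
    linarith [hc M]

section Mackey

variable {X ι : Type*} [AddCommGroup X] [Module ℝ X] [TopologicalSpace X] [T1Space X]
  {Γ : ι → Seminorm ℝ X}

theorem MackeyComplete.exists_tendsto_of_seminorm_le (hX : MackeyComplete X)
    (hΓ : WithSeminorms Γ) {x : ℕ → X} {b : ℕ → ℕ → ℝ} (hb0 : ∀ n k, 0 ≤ b n k)
    (hb : Tendsto (fun p : ℕ × ℕ => b p.1 p.2) atTop (𝓝 0)) (K : ι → ℝ)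
    (hx : ∀ i n k, Γ i (x n - x k) ≤ b n k * K i) :
    ∃ z, Tendsto x atTop (𝓝 z) := by
  refine hX x ⟨{w | ∀ i, Γ i w ≤ |K i|}, b, ?_, hb, fun n k => ?_⟩
  · rw [hΓ.isVonNBounded_iff_seminorm_bounded]
    exact fun i => ⟨|K i| + 1, by positivity, fun w hw => (hw i).trans_lt (lt_add_one _)⟩
  rcases (hb0 n k).eq_or_lt with hbnk | hbpos
  · have hxnk : x n - x k = 0 := by
      by_contra hne
      obtain ⟨i, hi⟩ := hΓ.separating_of_T1 _ hne
      have := hx i n k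
      rw [← hbnk, zero_mul] at this
      exact hi (le_antisymm this (apply_nonneg _ _))
    rw [← hbnk, hxnk]
    exact ⟨0, fun i => by simp, zero_smul _ _⟩
  · rw [Set.mem_smul_set_iff_inv_smul_mem₀ hbpos.ne']
    intro i
    rw [map_smul_eq_mul, norm_inv, Real.norm_of_nonneg hbpos.le, inv_mul_le_iff₀ hbpos]
    exact (hx i n k).trans (mul_le_mul_of_nonneg_left (le_abs_self _) hbpos.le)

theorem MackeyComplete.exists_tendsto_sum_smul (hX : MackeyComplete X) (hΓ : WithSeminorms Γ)
    {B : Set X} (hB : IsVonNBounded ℝ B) {x : ℕ → X} (hx : ∀ n, x n ∈ B) {c : ℕ → ℝ}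
    (hc0 : ∀ n, 0 ≤ c n) (hc : Summable c) :
    ∃ z, Tendsto (fun n => ∑ j ∈ range n, c j • x j) atTop (𝓝 z) := by
  choose K _ hK using hΓ.isVonNBounded_iff_seminorm_bounded.1 hB
  have hS := hc.tendsto_sum_tsum_nat
  have hfst := tendsto_fst (f := (atTop : Filter ℕ)) (g := (atTop : Filter ℕ))
  have hsnd := tendsto_snd (f := (atTop : Filter ℕ)) (g := (atTop : Filter ℕ))
  rw [prod_atTop_atTop_eq] at hfst hsnd
  have hb := ((hS.comp hfst).sub (hS.comp hsnd)).abs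
  rw [sub_self, abs_zero] at hb
  refine hX.exists_tendsto_of_seminorm_le hΓ
    (b := fun n k => |∑ j ∈ range n, c j - ∑ j ∈ range k, c j|) (fun _ _ => abs_nonneg _) hb K
    fun i n k => ?_
  wlog hkn : k ≤ n generalizing n k
  · rw [← map_neg_eq_map, neg_sub, abs_sub_comm]
    exact this k n (le_of_not_ge hkn)
  rw [← sum_Ico_eq_sub _ hkn, ← sum_Ico_eq_sub _ hkn,
    abs_of_nonneg (sum_nonneg fun j _ => hc0 j)]
  exact (Γ i).map_sum_smul_le _ (fun j _ => hc0 j) fun j _ => (hK i _ (hx j)).le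

end Mackey

section

variable {X : Type*} [AddCommGroup X] [Module ℝ X] [TopologicalSpace X]

lemma frequently_le_seminorm_exp_smul (T : ℝ → X →L[ℝ] X) (q : Seminorm ℝ X) {B : Set X}
    (hfail : ¬ ∃ ω > 0, ∀ ε > 0, ∀ᶠ t in atTop, ∀ x ∈ B, q (exp (ω * t) • T t x) ≤ ε)
    {ω : ℝ} (hω : 0 < ω) (M : ℝ) :
    ∃ᶠ t in atTop, ∃ x ∈ B, M ≤ q (exp (ω * t) • T t x) := by
  push Not at hfail
  obtain ⟨ε, hε, hfreq⟩ := hfail (ω / 2) (half_pos hω)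
  have hlarge : ∀ᶠ t in atTop, M ≤ exp (ω / 2 * t) * ε :=
    ((tendsto_exp_atTop.comp (tendsto_id.const_mul_atTop (half_pos hω))).atTop_mul_const
      hε).eventually_ge_atTop M
  refine (hfreq.and_eventually hlarge).mono fun t ⟨⟨x, hx, hεx⟩, hM⟩ => ⟨x, hx, ?_⟩
  calc M ≤ exp (ω / 2 * t) * ε := hM
    _ ≤ exp (ω / 2 * t) * q (exp (ω / 2 * t) • T t x) := by gcongr
    _ = q (exp (ω * t) • T t x) := by
      rw [← q.map_exp_smul, smul_smul, ← exp_add]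
      ring_nf

structure GlidingHump (T : ℝ → X →L[ℝ] X) (q : Seminorm ℝ X) (B : Set X) where
  x : ℕ → X
  c : ℕ → ℝ
  r : ℕ → ℝ
  t : ℕ → ℝ
  mem : ∀ n, x n ∈ B
  c_pos : ∀ n, 0 < c n
  c_succ_le : ∀ n, c (n + 1) ≤ c n / 2
  r_le : ∀ n : ℕ, r n ≤ 1 / ((n : ℝ) + 1)
  le_t : ∀ n : ℕ, (n : ℝ) ≤ t n
  head : ∀ n, q (exp (r n * t n) • T (t n) (∑ j ∈ range n, c j • x j)) ≤ 1
  hump : ∀ n, 4 ≤ c n * q (exp (r n * t n) • T (t n) (x n))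
  tail : ∀ n, ∀ y ∈ B, q (exp (r n * t n) • T (t n) y) ≤ (2 * c (n + 1))⁻¹

lemma exists_glidingHump_step {T : ℝ → X →L[ℝ] X} {q : Seminorm ℝ X} {B : Set X}
    (hunbdd : ∀ ω > 0, ∀ M, ∃ᶠ t in atTop, ∃ x ∈ B, M ≤ q (exp (ω * t) • T t x))
    (hbdd : ∀ t, ∃ C > 0, ∀ x ∈ B, q (T t x) < C) {s : X} {W : ℝ} (hW : 0 < W)
    (hs : ∀ᶠ t in atTop, q (exp (W * t) • T t s) ≤ 1) (n : ℕ) (M : ℝ) :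
    ∃ t : ℝ, ∃ x ∈ B, ∃ K > 0, (n : ℝ) ≤ t ∧
      q (exp (min W (1 / (n + 1)) * t) • T t s) ≤ 1 ∧
      M ≤ q (exp (min W (1 / (n + 1)) * t) • T t x) ∧
      ∀ y ∈ B, q (exp (min W (1 / (n + 1)) * t) • T t y) ≤ K := by
  have hhead : ∀ᶠ t in atTop, q (exp (min W (1 / (n + 1)) * t) • T t s) ≤ 1 :=
    (hs.and (eventually_ge_atTop 0)).mono fun t ⟨h, ht⟩ =>
      (q.map_exp_mul_smul_mono (min_le_left _ _) ht _).trans h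
  obtain ⟨t, ⟨x, hx, hM⟩, hn, hst⟩ := ((hunbdd _ (lt_min hW Nat.one_div_pos_of_nat) M
    ).and_eventually ((eventually_ge_atTop (n : ℝ)).and hhead)).exists
  obtain ⟨C, hC, hCB⟩ := hbdd t
  refine ⟨t, x, hx, exp (min W (1 / (n + 1)) * t) * C, mul_pos (exp_pos _) hC, hn, hst, hM,
    fun y hy => ?_⟩
  rw [q.map_exp_smul]
  gcongr
  exact (hCB y hy).le

theorem nonempty_glidingHump {T : ℝ → X →L[ℝ] X} {q : Seminorm ℝ X} {B : Set X}
    (hunbdd : ∀ ω > 0, ∀ M, ∃ᶠ t in atTop, ∃ x ∈ B, M ≤ q (exp (ω * t) • T t x))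
    (hdecay : ∀ y, ∃ ω > 0, ∀ᶠ t in atTop, q (exp (ω * t) • T t y) ≤ 1)
    (hbdd : ∀ t, ∃ C > 0, ∀ x ∈ B, q (T t x) < C) :
    Nonempty (GlidingHump T q B) := by
  choose W hW hWdecay using hdecay
  choose τ ξ hξ K hK hle_τ hhead hhump hKB using fun n s (c : ℝ) =>
    exists_glidingHump_step hunbdd hbdd (hW s) (hWdecay s) n (4 / c)
  -- the state after `n` steps: the `n`-th partial sum and the `n`-th coefficient
  let next (n : ℕ) (sc : X × ℝ) : X × ℝ :=
    (sc.1 + sc.2 • ξ n sc.1 sc.2, min sc.2 (K n sc.1 sc.2)⁻¹ / 2)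
  let sc (n : ℕ) : X × ℝ := Nat.rec (0, 1) next n
  have hsc_pos : ∀ n, 0 < (sc n).2 := by
    intro n
    induction n with
    | zero => exact one_pos
    | succ n ih => exact half_pos (lt_min ih (inv_pos.2 (hK _ _ _)))
  have hsc_sum : ∀ n, (sc n).1 = ∑ j ∈ range n, (sc j).2 • ξ j (sc j).1 (sc j).2 := by
    intro n
    induction n with
    | zero => rfl
    | succ n ih => rw [sum_range_succ, ← ih]
  refine ⟨{
    x := fun n => ξ n (sc n).1 (sc n).2
    c := fun n => (sc n).2
    r := fun n => min (W (sc n).1) (1 / (n + 1))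
    t := fun n => τ n (sc n).1 (sc n).2
    mem := fun n => hξ _ _ _
    c_pos := hsc_pos
    c_succ_le := fun n => div_le_div_of_nonneg_right (min_le_left _ _) zero_le_two
    r_le := fun n => min_le_right _ _
    le_t := fun n => hle_τ _ _ _
    head := fun n => by rw [← hsc_sum]; exact hhead _ _ _
    hump := fun n => (div_le_iff₀' (hsc_pos n)).1 (hhump _ _ _)
    tail := fun n y hy => ?_ }⟩
  have htwice : 2 * (sc (n + 1)).2 = min (sc n).2 (K n (sc n).1 (sc n).2)⁻¹ :=
    mul_div_cancel₀ _ two_ne_zero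
  rw [htwice]
  exact (hKB _ _ _ y hy).trans ((le_inv_comm₀ (hK _ _ _)
    (lt_min (hsc_pos n) (inv_pos.2 (hK _ _ _)))).2 (min_le_right _ _))

namespace GlidingHump

variable {T : ℝ → X →L[ℝ] X} {q : Seminorm ℝ X} {B : Set X} (H : GlidingHump T q B)

lemma summable_c : Summable H.c := by
  refine summable_of_ratio_norm_eventually_le (r := 1 / 2) (by norm_num) (.of_forall fun n => ?_)
  rw [Real.norm_of_nonneg (H.c_pos _).le, Real.norm_of_nonneg (H.c_pos _).le]
  linarith [H.c_succ_le n]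

lemma two_le_seminorm_sum {n M : ℕ} (hnM : n < M) :
    2 ≤ q (exp (H.r n * H.t n) • T (H.t n) (∑ j ∈ range M, H.c j • H.x j)) := by
  let p : Seminorm ℝ X := q.comp (exp (H.r n * H.t n) • (T (H.t n) : X →ₗ[ℝ] X))
  let s (m : ℕ) : X := ∑ j ∈ range m, H.c j • H.x j
  have hc : 0 < 2 * H.c (n + 1) := mul_pos two_pos (H.c_pos _)
  have hrest : p (s M - s (n + 1)) ≤ 1 := by
    rw [← sum_Ico_eq_sub _ hnM]
    calc p (∑ j ∈ Ico (n + 1) M, H.c j • H.x j)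
        ≤ (∑ j ∈ Ico (n + 1) M, H.c j) * (2 * H.c (n + 1))⁻¹ :=
          p.map_sum_smul_le _ (fun j _ => (H.c_pos j).le) fun j _ => H.tail n _ (H.mem j)
      _ ≤ (2 * H.c (n + 1)) * (2 * H.c (n + 1))⁻¹ := by
          gcongr
          exact sum_Ico_le_two_mul_of_le_half (fun j => (H.c_pos j).le) H.c_succ_le hnM
      _ = 1 := mul_inv_cancel₀ hc.ne'
  have hhump : 4 ≤ p (H.c n • H.x n) := by
    rw [map_smul_eq_mul, Real.norm_of_nonneg (H.c_pos n).le]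
    exact H.hump n
  have hsplit : H.c n • H.x n = s M - s n - (s M - s (n + 1)) := by
    simp only [s, sum_range_succ]
    abel
  have hhead : p (s n) ≤ 1 := H.head n
  change 2 ≤ p (s M)
  rw [hsplit] at hhump
  linarith [map_sub_le_add p (s M - s n) (s M - s (n + 1)), map_sub_le_add p (s M) (s n)]

theorem not_forall_decay {ι : Type*} [T1Space X] {Γ : ι → Seminorm ℝ X}
    (H : GlidingHump T q B) (hX : MackeyComplete X) (hΓ : WithSeminorms Γ) (hq : Continuous q)
    (hB : IsVonNBounded ℝ B) :
    ¬ ∀ y, ∃ ω > 0, ∀ᶠ t in atTop, q (exp (ω * t) • T t y) ≤ 1 := by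
  intro hdecay
  obtain ⟨z, hz⟩ :=
    hX.exists_tendsto_sum_smul hΓ hB H.mem (fun n => (H.c_pos n).le) H.summable_c
  obtain ⟨W, hW, hWz⟩ := hdecay z
  have ht : Tendsto H.t atTop atTop := tendsto_atTop_mono H.le_t tendsto_natCast_atTop_atTop
  obtain ⟨n, hrn, hzn⟩ := ((tendsto_one_div_add_atTop_nhds_zero_nat.eventually
    (gt_mem_nhds hW)).and (ht.eventually hWz)).exists
  have hcont : Continuous fun w => q (exp (H.r n * H.t n) • T (H.t n) w) := by
    simp_rw [q.map_exp_smul]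
    exact continuous_const.mul (hq.comp (T _).continuous)
  have hlow : 2 ≤ q (exp (H.r n * H.t n) • T (H.t n) z) :=
    ge_of_tendsto ((hcont.tendsto z).comp hz)
      ((eventually_gt_atTop n).mono fun _ => H.two_le_seminorm_sum)
  have hup := (q.map_exp_mul_smul_mono ((H.r_le n).trans hrn.le)
    ((Nat.cast_nonneg n).trans (H.le_t n)) _).trans hzn
  linarith

end GlidingHump

end

theorem exists_uniform_decay_of_forall_decay {X ι : Type*} [AddCommGroup X] [Module ℝ X]
    [TopologicalSpace X] [T1Space X] {Γ : ι → Seminorm ℝ X} (hX : MackeyComplete X)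
    (hΓ : WithSeminorms Γ) (T : ℝ → X →L[ℝ] X) (i : ι)
    (hdecay : ∀ x, ∃ ω > 0, Tendsto (fun t => Γ i (exp (ω * t) • T t x)) atTop (𝓝 0))
    {B : Set X} (hB : IsVonNBounded ℝ B) :
    ∃ ω > 0, ∀ ε > 0, ∀ᶠ t in atTop, ∀ x ∈ B, Γ i (exp (ω * t) • T t x) ≤ ε := by
  have hdecay' : ∀ y, ∃ ω > 0, ∀ᶠ t in atTop, Γ i (exp (ω * t) • T t y) ≤ 1 := fun y =>
    (hdecay y).imp fun _ ⟨hω, h⟩ => ⟨hω, h.eventually (ge_mem_nhds one_pos)⟩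
  by_contra hfail
  obtain ⟨H⟩ := nonempty_glidingHump (fun _ => frequently_le_seminorm_exp_smul T (Γ i) hfail)
    hdecay' fun t => (hΓ.image_isVonNBounded_iff_seminorm_bounded (T t)).1 (hB.image (T t)) i
  exact H.not_forall_decay hX hΓ (hΓ.continuous_seminorm i) hB hdecay'

theorem statement8_general {X : Type*} [AddCommGroup X] [Module ℝ X] [TopologicalSpace X]
    [T2Space X] (hX : MackeyComplete X)
    {ι : Type*} (Γ : ι → Seminorm ℝ X) (hΓ : WithSeminorms Γ)
    (T : ℝ → X →L[ℝ] X) :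
    (∀ i : ι, ∀ x : X, ∃ ω > (0:ℝ),
        Tendsto (fun t : ℝ => Γ i (Real.exp (ω * t) • T t x)) atTop (nhds 0)) ↔
    (∀ i : ι, ∀ B : Set X, IsVonNBounded ℝ B → ∃ ω > (0:ℝ), ∀ ε > (0:ℝ),
        ∃ t₀ : ℝ, ∀ t ≥ t₀, ∀ x ∈ B, Γ i (Real.exp (ω * t) • T t x) ≤ ε) := by
  simp only [← eventually_atTop]
  refine ⟨fun hdecay i B hB => exists_uniform_decay_of_forall_decay hX hΓ T i (hdecay i) hB,
    fun huniform i x => ?_⟩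
  have := hΓ.continuousSMul
  obtain ⟨ω, hω, hx⟩ := huniform i {x} (isVonNBounded_singleton x)
  refine ⟨ω, hω, tendsto_order.2 ⟨fun a ha => .of_forall fun t => ha.trans_le (apply_nonneg _ _),
    fun a ha => (hx (a / 2) (half_pos ha)).mono fun t ht => ?_⟩⟩
  linarith [ht x rfl]

/-- For a Mackey complete Hausdorff locally convex space `X` and a `C₀`-semigroup
on `X`, pseudo strong exponential stability (iii) is equivalent to condition (iv). -/
theorem statement8 {X : Type*} [AddCommGroup X] [Module ℝ X] [TopologicalSpace X]
    [T2Space X] (hX : MackeyComplete X)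
    {ι : Type*} [Nonempty ι] (Γ : ι → Seminorm ℝ X) (hΓ : WithSeminorms Γ)
    (T : ℝ → X →L[ℝ] X)
    (hT0 : T 0 = ContinuousLinearMap.id ℝ X)
    (hTsg : ∀ s t : ℝ, 0 ≤ s → 0 ≤ t → T (s + t) = (T s).comp (T t))
    (hTc : ∀ x : X, ContinuousOn (fun t : ℝ => T t x) (Set.Ici 0)) :
    (∀ i : ι, ∀ x : X, ∃ ω > (0:ℝ),
        Tendsto (fun t : ℝ => Γ i (Real.exp (ω * t) • T t x)) atTop (nhds 0)) ↔
    (∀ i : ι, ∀ B : Set X, IsVonNBounded ℝ B → ∃ ω > (0:ℝ), ∀ ε > (0:ℝ),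
        ∃ t₀ : ℝ, ∀ t ≥ t₀, ∀ x ∈ B, Γ i (Real.exp (ω * t) • T t x) ≤ ε) :=
  statement8_general hX Γ hΓ T
end

section
/- Let X be a Mackey complete, barrelled Hausdorff locally convex space whose topology is induced by a family Γ_X of continuous seminorms, and let (T(t))_{t≥0} be an exponentially bounded C₀-semigroup on X. If (T(t))_{t≥0} is pseudo strongly exponentially stable, i.e., for every q ∈ Γ_X and every x ∈ X there exists ω > 0 with lim_{t→∞} q(e^{ωt} T(t)x) = 0, then (T(t))_{t≥0} is super polynomially stable, i.e., for every α > 1, every bounded set B ⊆ X and every q ∈ Γ_X one has lim_{t→∞} sup_{x∈B} q(t^α T(t)x) = 0. -/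
/-!
Fix `α > 1`, a seminorm `Γ i` and put `β = α + 1`. For each `x`, pseudo strong exponential
stability makes `t ^ β • T t x` tend to `0` in `Γ i`, and strong continuity bounds it on compact
intervals, so the continuous seminorms `x ↦ Γ i (t ^ β • T t x)`, `t ≥ 0`, are pointwise bounded.
Since `X` is barrelled, the uniform boundedness principle bounds them by a constant `C` uniformly
on any bounded set `B`, and then `Γ i (t ^ α • T t x) ≤ C / t → 0` uniformly for `x ∈ B`.
-/

open Filter Topology Bornology Pointwise

open Set

theorem ContinuousOn.bddAbove_image_Ici_of_tendsto {f : ℝ → ℝ} {a l : ℝ}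
    (hf : ContinuousOn f (Ici a)) (hlim : Tendsto f atTop (𝓝 l)) : BddAbove (f '' Ici a) := by
  obtain ⟨b, hb⟩ := eventually_atTop.mp (hlim.eventually (eventually_le_nhds (lt_add_one l)))
  have hcover : f '' Ici a ⊆ f '' Icc a b ∪ f '' Ici b := by
    rw [← image_union]
    exact image_mono fun t ht => (le_total t b).elim (fun h => .inl ⟨ht, h⟩) .inr
  refine BddAbove.mono hcover (.union ?_ ⟨l + 1, ?_⟩)
  · exact isCompact_Icc.bddAbove_image (hf.mono Icc_subset_Ici_self)
  · rintro _ ⟨t, ht, rfl⟩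
    exact hb t ht

theorem Seminorm.bddAbove_image_of_isVonNBounded {𝕜 E : Type*} [NontriviallyNormedField 𝕜]
    [AddCommGroup E] [Module 𝕜 E] [TopologicalSpace E] {p : Seminorm 𝕜 E} (hp : Continuous p)
    {B : Set E} (hB : IsVonNBounded 𝕜 B) : BddAbove (p '' B) := by
  have hU : {x | p x < 1} ∈ 𝓝 (0 : E) :=
    (isOpen_lt hp continuous_const).mem_nhds (by simp)
  obtain ⟨c, hc⟩ := (hB hU).exists
  refine ⟨‖c‖, ?_⟩
  rintro _ ⟨_, hx, rfl⟩
  obtain ⟨y, hy, rfl⟩ := hc hx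
  calc p (c • y) = ‖c‖ * p y := map_smul_eq_mul p c y
    _ ≤ ‖c‖ * 1 := by gcongr; exact le_of_lt hy
    _ = ‖c‖ := mul_one _

theorem BarrelledSpace.exists_bound_of_isVonNBounded {κ 𝕜 E F : Type*}
    [NontriviallyNormedField 𝕜] [AddCommGroup E] [Module 𝕜 E] [TopologicalSpace E]
    [BarrelledSpace 𝕜 E] [AddCommGroup F] [Module 𝕜 F] [TopologicalSpace F]
    {p : Seminorm 𝕜 F} (hp : Continuous p) (A : κ → E →L[𝕜] F)
    (hA : ∀ x, BddAbove (range fun k => p (A k x))) {B : Set E} (hB : IsVonNBounded 𝕜 B) :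
    ∃ C, ∀ k, ∀ x ∈ B, p (A k x) ≤ C := by
  set q : κ → Seminorm 𝕜 E := fun k => p.comp (A k).toLinearMap
  have hq : BddAbove (range q) := Seminorm.bddAbove_range_iff.mpr hA
  have hsup : Continuous (⨆ k, q k : Seminorm 𝕜 E) := by
    rw [Seminorm.coe_iSup_eq hq]
    exact Seminorm.continuous_iSup q (fun k => hp.comp (A k).continuous) hq
  obtain ⟨C, hC⟩ := Seminorm.bddAbove_image_of_isVonNBounded hsup hB
  exact ⟨C, fun k x hx => (le_ciSup hq k x).trans (hC ⟨x, hx, rfl⟩)⟩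

theorem Seminorm.tendsto_rpow_smul_of_tendsto_exp_smul {E : Type*} [AddCommGroup E]
    [Module ℝ E] (p : Seminorm ℝ E) {f : ℝ → E} {ω : ℝ} (hω : 0 < ω)
    (h : Tendsto (fun t => p (Real.exp (ω * t) • f t)) atTop (𝓝 0)) (β : ℝ) :
    Tendsto (fun t : ℝ => p (t ^ β • f t)) atTop (𝓝 0) := by
  have hdecay := (tendsto_rpow_mul_exp_neg_mul_atTop_nhds_zero β ω hω).norm.mul h
  rw [norm_zero, zero_mul] at hdecay
  refine hdecay.congr fun t => ?_
  rw [← map_smul_eq_mul, smul_smul, mul_assoc, ← Real.exp_add, neg_mul, neg_add_cancel,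
    Real.exp_zero, mul_one]

theorem statement10_general {X : Type*} [AddCommGroup X] [Module ℝ X] [TopologicalSpace X]
    [BarrelledSpace ℝ X]
    {ι : Type*} (Γ : ι → Seminorm ℝ X) (hΓ : WithSeminorms Γ)
    (T : ℝ → X →L[ℝ] X)
    (hTc : ∀ x : X, ContinuousOn (fun t : ℝ => T t x) (Set.Ici 0))
    (hpse : ∀ i : ι, ∀ x : X, ∃ ω > (0:ℝ),
      Tendsto (fun t : ℝ => Γ i (Real.exp (ω * t) • T t x)) atTop (nhds 0)) :
    ∀ α > (1:ℝ), ∀ B : Set X, IsVonNBounded ℝ B → ∀ i : ι, ∀ ε > (0:ℝ),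
      ∃ t₀ : ℝ, ∀ t ≥ t₀, ∀ x ∈ B, Γ i ((t ^ α : ℝ) • T t x) ≤ ε := by
  intro α hα B hB i ε hε
  have := hΓ.continuousSMul
  have hΓi := hΓ.continuous_seminorm i
  have hbdd : ∀ x, BddAbove (range fun t : Ici (0:ℝ) => Γ i (((t:ℝ) ^ (α + 1)) • T t x)) := by
    intro x
    obtain ⟨ω, hω, hlim⟩ := hpse i x
    rw [← image_eq_range (fun t : ℝ => Γ i (t ^ (α + 1) • T t x))]
    refine ContinuousOn.bddAbove_image_Ici_of_tendsto ?_
      ((Γ i).tendsto_rpow_smul_of_tendsto_exp_smul hω hlim _)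
    refine hΓi.comp_continuousOn (ContinuousOn.smul (fun t _ => ?_) (hTc x))
    exact (Real.continuousAt_rpow_const t _ (.inr (by linarith))).continuousWithinAt
  obtain ⟨C, hC⟩ := BarrelledSpace.exists_bound_of_isVonNBounded hΓi
    (fun t : Ici (0:ℝ) => ((t:ℝ) ^ (α + 1)) • T t) hbdd hB
  refine ⟨max 1 (C / ε), fun t ht x hx => ?_⟩
  have ht1 : 1 ≤ t := le_of_max_le_left ht
  have htpos : 0 < t := one_pos.trans_le ht1
  have hweight : (t ^ α : ℝ) • T t x = t⁻¹ • ((t ^ (α + 1) : ℝ) • T t x) := by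
    rw [smul_smul, Real.rpow_add_one htpos.ne', mul_left_comm, inv_mul_cancel₀ htpos.ne', mul_one]
  calc Γ i ((t ^ α : ℝ) • T t x) = t⁻¹ * Γ i ((t ^ (α + 1) : ℝ) • T t x) := by
        rw [hweight, map_smul_eq_mul, Real.norm_of_nonneg (inv_nonneg.mpr htpos.le)]
    _ ≤ t⁻¹ * C := by gcongr; exact hC ⟨t, htpos.le⟩ x hx
    _ ≤ ε := by
        rw [inv_mul_le_iff₀ htpos]
        have hCt : C / ε ≤ t := le_of_max_le_right ht
        rw [div_le_iff₀ hε] at hCt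
        linarith

/-- On a Mackey complete barrelled Hausdorff locally convex space, an exponentially
bounded, pseudo strongly exponentially stable `C₀`-semigroup is super polynomially stable. -/
theorem statement10 {X : Type*} [AddCommGroup X] [Module ℝ X] [TopologicalSpace X]
    [T2Space X] [BarrelledSpace ℝ X] (hX : MackeyComplete X)
    {ι : Type*} [Nonempty ι] (Γ : ι → Seminorm ℝ X) (hΓ : WithSeminorms Γ)
    (T : ℝ → X →L[ℝ] X)
    (hT0 : T 0 = ContinuousLinearMap.id ℝ X)
    (hTsg : ∀ s t : ℝ, 0 ≤ s → 0 ≤ t → T (s + t) = (T s).comp (T t))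
    (hTc : ∀ x : X, ContinuousOn (fun t : ℝ => T t x) (Set.Ici 0))
    (hexp : ∀ i : ι, ∃ j : ι, ∃ M : ℝ, 1 ≤ M ∧ ∃ ω : ℝ,
      ∀ t : ℝ, 0 ≤ t → ∀ x : X, Γ i (T t x) ≤ M * Real.exp (ω * t) * Γ j x)
    (hpse : ∀ i : ι, ∀ x : X, ∃ ω > (0:ℝ),
      Tendsto (fun t : ℝ => Γ i (Real.exp (ω * t) • T t x)) atTop (nhds 0)) :
    ∀ α > (1:ℝ), ∀ B : Set X, IsVonNBounded ℝ B → ∀ i : ι, ∀ ε > (0:ℝ),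
      ∃ t₀ : ℝ, ∀ t ≥ t₀, ∀ x ∈ B, Γ i ((t ^ α : ℝ) • T t x) ≤ ε :=
  statement10_general Γ hΓ T hTc hpse
end

section
/- (Principle of condensation of singularities) Let Y be a topological vector space which is a Baire space, let X be a (not necessarily Hausdorff) locally convex space whose topology is induced by a family Γ_X of continuous seminorms, and for each ν ∈ ℕ and μ ∈ [0,∞) let T_{ν,μ} : Y → X be a continuous linear map. Then the following are equivalent: (i) for every ν ∈ ℕ there exists y ∈ Y such that the set {T_{ν,μ} y : μ ≥ 0} is unbounded in X; (ii) there exists y ∈ Y such that for every ν ∈ ℕ the set {T_{ν,μ} y : μ ≥ 0} is unbounded in X. -/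
/-!
For a single `ν`, the points at which `{T ν μ y}` is bounded for a fixed seminorm form the
countable union over `n` of the closed sets `{y | ∀ μ, q (T ν μ y) ≤ n}`. If one of them had
interior, translation and the triangle inequality would bound the family on a neighbourhood of `0`,
and since such a neighbourhood is absorbent, at every point — contradicting the existence of one
unbounded point. So these sets are meagre, their union over `ν` is meagre, and in a Baire space
some point lies outside it.
-/

open Filter Topology Set

namespace Seminorm

variable {Y : Type*} [AddCommGroup Y] [Module ℝ Y] [TopologicalSpace Y] {κ : Type*}

theorem bddAbove_range_of_forall_le_on_nhds_zero [ContinuousSMul ℝ Y] (q : κ → Seminorm ℝ Y)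
    {W : Set Y} (hW : W ∈ 𝓝 0) {C : ℝ} (hC : ∀ k, ∀ v ∈ W, q k v ≤ C) (y : Y) :
    BddAbove (range fun k => q k y) := by
  obtain ⟨c, hcW, hc0⟩ :=
    (((absorbent_nhds_zero (𝕜 := ℝ) hW).eventually_nhdsNE_zero y).and self_mem_nhdsWithin).exists
  have hc0 : c ≠ 0 := hc0
  refine ⟨‖c‖⁻¹ * C, forall_mem_range.2 fun k => ?_⟩
  calc q k y = ‖c‖⁻¹ * q k (c • y) := by
        rw [map_smul_eq_mul, inv_mul_cancel_left₀ (norm_ne_zero_iff.2 hc0)]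
    _ ≤ ‖c‖⁻¹ * C := by gcongr; exact hC k _ hcW

theorem exists_forall_le_on_nhds_zero_of_mem_interior [ContinuousAdd Y] (q : κ → Seminorm ℝ Y)
    {C : ℝ} {x₀ : Y} (hx₀ : x₀ ∈ interior {y | ∀ k, q k y ≤ C}) :
    ∃ W ∈ 𝓝 (0 : Y), ∀ k, ∀ v ∈ W, q k v ≤ 2 * C := by
  refine ⟨(x₀ + ·) ⁻¹' {y | ∀ k, q k y ≤ C}, ?_, fun k v hv => ?_⟩
  · exact (continuous_const_add x₀).continuousAt.preimage_mem_nhds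
      (by simpa using mem_interior_iff_mem_nhds.1 hx₀)
  · calc q k v = q k (x₀ + v - x₀) := by rw [add_sub_cancel_left]
      _ ≤ q k (x₀ + v) + q k x₀ := map_sub_le_add _ _ _
      _ ≤ 2 * C := by linarith [hv k, interior_subset hx₀ k]

variable [ContinuousAdd Y] [ContinuousSMul ℝ Y]

theorem isNowhereDense_setOf_forall_le (q : κ → Seminorm ℝ Y) (hq : ∀ k, Continuous (q k))
    {y₀ : Y} (hy₀ : ¬BddAbove (range fun k => q k y₀)) (C : ℝ) :
    IsNowhereDense {y | ∀ k, q k y ≤ C} := by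
  have hclosed : IsClosed {y | ∀ k, q k y ≤ C} := by
    simpa only [ofPred_forall] using isClosed_iInter fun k => isClosed_le (hq k) continuous_const
  rw [hclosed.isNowhereDense_iff, eq_empty_iff_forall_notMem]
  intro x₀ hx₀
  obtain ⟨W, hW, hWC⟩ := exists_forall_le_on_nhds_zero_of_mem_interior q hx₀
  exact hy₀ (bddAbove_range_of_forall_le_on_nhds_zero q hW hWC y₀)

theorem isMeagre_setOf_bddAbove_range (q : κ → Seminorm ℝ Y) (hq : ∀ k, Continuous (q k))
    {y₀ : Y} (hy₀ : ¬BddAbove (range fun k => q k y₀)) :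
    IsMeagre {y | BddAbove (range fun k => q k y)} := by
  have hcover : {y | BddAbove (range fun k => q k y)} ⊆ ⋃ n : ℕ, {y | ∀ k, q k y ≤ n} := by
    rintro y ⟨C, hC⟩
    obtain ⟨n, hn⟩ := exists_nat_ge C
    exact mem_iUnion.2 ⟨n, fun k => (hC (mem_range_self k)).trans hn⟩
  exact (isMeagre_iUnion fun n : ℕ => (isNowhereDense_setOf_forall_le q hq hy₀ n).isMeagre).mono hcover

theorem exists_forall_not_bddAbove_range [BaireSpace Y] {ι : Type*} [Countable ι]
    (q : ι → κ → Seminorm ℝ Y) (hq : ∀ i k, Continuous (q i k))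
    (h : ∀ i, ∃ y, ¬BddAbove (range fun k => q i k y)) :
    ∃ y, ∀ i, ¬BddAbove (range fun k => q i k y) := by
  choose y₀ hy₀ using h
  have hmeagre := isMeagre_iUnion fun i => isMeagre_setOf_bddAbove_range (q i) (hq i) (hy₀ i)
  have hne : ⋃ i, {y | BddAbove (range fun k => q i k y)} ≠ univ := fun h =>
    not_isMeagre_of_isOpen isOpen_univ univ_nonempty (h ▸ hmeagre)
  obtain ⟨y, hy⟩ := (ne_univ_iff_exists_notMem _).1 hne
  exact ⟨y, fun i hi => hy (mem_iUnion.2 ⟨i, hi⟩)⟩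

end Seminorm

theorem statement12_general {Y : Type*} [AddCommGroup Y] [Module ℝ Y] [TopologicalSpace Y]
    [IsTopologicalAddGroup Y] [ContinuousSMul ℝ Y] [BaireSpace Y]
    {X : Type*} [AddCommGroup X] [Module ℝ X] [TopologicalSpace X]
    {ι : Type*} (Γ : ι → Seminorm ℝ X) (hΓ : WithSeminorms Γ)
    (T : ℕ → ℝ → Y →L[ℝ] X) :
    (∀ ν : ℕ, ∃ y : Y, ∃ i : ι, ∀ C : ℝ, ∃ μ : ℝ, 0 ≤ μ ∧ C < Γ i (T ν μ y)) ↔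
    (∃ y : Y, ∀ ν : ℕ, ∃ i : ι, ∀ C : ℝ, ∃ μ : ℝ, 0 ≤ μ ∧ C < Γ i (T ν μ y)) := by
  refine ⟨fun h => ?_, fun ⟨y, hy⟩ ν => ⟨y, hy ν⟩⟩
  choose y₀ i hy₀ using h
  let q : ℕ → Ici (0 : ℝ) → Seminorm ℝ Y := fun ν μ => (Γ (i ν)).comp (T ν μ).toLinearMap
  have hunbounded : ∀ ν y, ¬BddAbove (range fun μ => q ν μ y) ↔
      ∀ C : ℝ, ∃ μ : ℝ, 0 ≤ μ ∧ C < Γ (i ν) (T ν μ y) := by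
    simp [q, not_bddAbove_iff]
  obtain ⟨y, hy⟩ := Seminorm.exists_forall_not_bddAbove_range q
    (fun ν μ => (hΓ.continuous_seminorm (i ν)).comp (T ν μ).continuous)
    (fun ν => ⟨y₀ ν, (hunbounded ν _).2 (hy₀ ν)⟩)
  exact ⟨y, fun ν => ⟨i ν, (hunbounded ν y).1 (hy ν)⟩⟩

/-- Principle of condensation of singularities: Let `Y` be a topological vector
space which is a Baire space and `X` a (not necessarily Hausdorff) locally convex space with
topology induced by the seminorm family `Γ`.  For continuous linear maps
`T ν μ : Y → X` (`ν ∈ ℕ`, `μ ≥ 0`): singularities for each `ν` separately occur iff there is one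
point `y` at which they all condense.  Here a set `S` is unbounded iff `sup_{x ∈ S} q x = ∞`
for some seminorm `q` of the family. -/
theorem statement12 {Y : Type*} [AddCommGroup Y] [Module ℝ Y] [TopologicalSpace Y]
    [IsTopologicalAddGroup Y] [ContinuousSMul ℝ Y] [BaireSpace Y]
    {X : Type*} [AddCommGroup X] [Module ℝ X] [TopologicalSpace X]
    {ι : Type*} [Nonempty ι] (Γ : ι → Seminorm ℝ X) (hΓ : WithSeminorms Γ)
    (T : ℕ → ℝ → Y →L[ℝ] X) :
    (∀ ν : ℕ, ∃ y : Y, ∃ i : ι, ∀ C : ℝ, ∃ μ : ℝ, 0 ≤ μ ∧ C < Γ i (T ν μ y)) ↔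
    (∃ y : Y, ∀ ν : ℕ, ∃ i : ι, ∀ C : ℝ, ∃ μ : ℝ, 0 ≤ μ ∧ C < Γ i (T ν μ y)) :=
  statement12_general Γ hΓ T
end

section
/- Let Y be a locally convex space which is a Baire space, with seminorm family Γ_Y, let X be a (not necessarily Hausdorff) locally convex space with seminorm family Γ_X, let (T(t))_{t≥0} be a locally equicontinuous family of continuous linear maps from Y to X, and let H be a set of strictly positive functions [0,∞) → ℝ, each bounded on compact intervals, such that there exists a sequence (h_n)_{n∈ℕ} ⊆ H with the property that for every h ∈ H there is n ∈ ℕ with h_n(t)/h(t) → 0 as t → ∞. Then the following are equivalent: (i) for every y ∈ Y there exists h ∈ H with lim_{t→∞} h(t) T(t)y = 0 in X; (ii) there exists h ∈ H such that lim_{t→∞} h(t) T(t)y = 0 in X for every y ∈ Y. -/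
/-!
Let `D n` be the subspace of those `y` with `h_n(t) T(t) y → 0`. Since `h_n / h → 0`, every
point lies in some `D n`, so by Baire some `D n` is non-meagre, hence dense. On `D n` the weighted
orbits `t ↦ p(h_n(t) T(t) y)` are bounded on `[0, ∞)` (local equicontinuity near `0`, decay at
infinity), so the Baire argument of the uniform boundedness principle, run on the non-meagre set
`D n` instead of the whole space, dominates the weighted family by one continuous seminorm. The set
where such a dominated family tends to `0` is closed, so the dense subspace `D n` is everything.
-/

open Filter Set Topology

theorem exists_nonempty_interior_of_not_isMeagre {X ι : Type*} [TopologicalSpace X] [Countable ι]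
    {s : Set X} {A : ι → Set X} (hs : ¬IsMeagre s) (hA : ∀ i, IsClosed (A i))
    (hsA : s ⊆ ⋃ i, A i) : ∃ i, (interior (A i)).Nonempty := by
  by_contra! h
  exact hs ((isMeagre_iUnion fun i ↦
    ((hA i).isNowhereDense_iff.mpr (h i)).isMeagre).mono hsA)

theorem Submodule.dense_of_not_isMeagre {𝕜 E : Type*} [NontriviallyNormedField 𝕜]
    [AddCommGroup E] [Module 𝕜 E] [TopologicalSpace E] [IsTopologicalAddGroup E]
    [ContinuousSMul 𝕜 E] {S : Submodule 𝕜 E} (hS : ¬IsMeagre (S : Set E)) :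
    Dense (S : Set E) := by
  have hint : (interior (closure (S : Set E))).Nonempty := by
    by_contra h
    exact hS (IsNowhereDense.isMeagre (not_nonempty_iff_eq_empty.mp h))
  have : NeBot (𝓝[{x : 𝕜 | IsUnit x}] 0) := NormedField.nhdsWithin_isUnit_neBot
  rw [← S.topologicalClosure_coe] at hint
  rw [dense_iff_closure_eq, ← S.topologicalClosure_coe,
    S.topologicalClosure.eq_top_of_nonempty_interior' hint, Submodule.top_coe]

theorem bddAbove_image_Ici_of_isBoundedUnder {f : ℝ → ℝ} {a : ℝ}
    (hloc : ∀ b, a ≤ b → BddAbove (f '' Icc a b)) (hf : IsBoundedUnder (· ≤ ·) atTop f) :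
    BddAbove (f '' Ici a) := by
  obtain ⟨M, hM⟩ := hf
  obtain ⟨b, hb⟩ := eventually_atTop.mp (eventually_map.mp hM)
  obtain ⟨N, hN⟩ := hloc (max a b) (le_max_left a b)
  refine ⟨max N M, forall_mem_image.mpr fun t ht ↦ ?_⟩
  rcases le_total t (max a b) with htb | htb
  · exact (hN (mem_image_of_mem f ⟨ht, htb⟩)).trans (le_max_left N M)
  · exact (hb t ((le_max_right a b).trans htb)).trans (le_max_right N M)

theorem Filter.Tendsto.smul_of_tendsto_div {𝕜 ι F : Type*} [NormedField 𝕜] [AddCommGroup F]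
    [Module 𝕜 F] [TopologicalSpace F] [ContinuousSMul 𝕜 F] {l : Filter ι} {g h : ι → 𝕜}
    {u : ι → F} (hu : Tendsto (fun t ↦ h t • u t) l (𝓝 0))
    (hgh : Tendsto (fun t ↦ g t / h t) l (𝓝 0))
    (hh : ∀ᶠ t in l, h t ≠ 0) : Tendsto (fun t ↦ g t • u t) l (𝓝 0) := by
  have := hgh.smul hu
  rw [zero_smul] at this
  refine this.congr' ?_
  filter_upwards [hh] with t ht
  rw [smul_smul, div_mul_cancel₀ _ ht]

theorem WithSeminorms.tendsto_nhds_zero_iff {𝕜 E F ι : Type*} [NormedField 𝕜] [AddCommGroup E]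
    [Module 𝕜 E] [TopologicalSpace E] {p : SeminormFamily 𝕜 E ι} (hp : WithSeminorms p)
    (u : F → E) {f : Filter F} :
    Tendsto u f (𝓝 0) ↔ ∀ i, Tendsto (fun x ↦ p i (u x)) f (𝓝 0) := by
  refine ⟨fun h i ↦ ((hp.continuous_seminorm i).tendsto' 0 0 (map_zero _)).comp h, fun h ↦ ?_⟩
  rw [hp.tendsto_nhds]
  intro i ε hε
  simpa using (h i).eventually (gt_mem_nhds hε)

namespace Seminorm

variable {𝕜 E ι : Type*} [AddCommGroup E] [TopologicalSpace E]

theorem exists_eventually_le_of_not_isMeagre [SeminormedRing 𝕜] [Module 𝕜 E]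
    [IsTopologicalAddGroup E] {q : ι → Seminorm 𝕜 E} (hq : ∀ k, Continuous (q k)) {s : Set E}
    (hs : ¬IsMeagre s) (hbdd : ∀ y ∈ s, BddAbove (range fun k ↦ q k y)) :
    ∃ C, ∀ᶠ x in 𝓝 0, ∀ k, q k x ≤ C := by
  let A : ℕ → Set E := fun n ↦ {y | ∀ k, q k y ≤ n}
  have hA : ∀ n, IsClosed (A n) := fun n ↦ by
    simp only [A, ofPred_forall]
    exact isClosed_iInter fun k ↦ isClosed_le (hq k) continuous_const
  have hsA : s ⊆ ⋃ n, A n := fun y hy ↦ by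
    obtain ⟨M, hM⟩ := hbdd y hy
    obtain ⟨n, hn⟩ := exists_nat_ge M
    exact mem_iUnion.mpr ⟨n, fun k ↦ (hM (mem_range_self k)).trans hn⟩
  obtain ⟨n, x, hx⟩ := exists_nonempty_interior_of_not_isMeagre hs hA hsA
  have hxn : x ∈ A n := interior_subset hx
  rw [mem_interior_iff_mem_nhds, ← map_add_left_nhds_zero] at hx
  refine ⟨n + n, ?_⟩
  filter_upwards [hx] with y hy k
  calc q k y = q k (x + y - x) := by rw [add_sub_cancel_left]
    _ ≤ q k (x + y) + q k x := map_sub_le_add _ _ _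
    _ ≤ n + n := add_le_add (hy k) (hxn k)

theorem exists_continuous_ge_of_eventually_le [NontriviallyNormedField 𝕜] [Module 𝕜 E]
    [IsTopologicalAddGroup E] [ContinuousSMul 𝕜 E] {q : ι → Seminorm 𝕜 E} {C : ℝ}
    (hC : ∀ᶠ x in 𝓝 0, ∀ k, q k x ≤ C) : ∃ p : Seminorm 𝕜 E, Continuous p ∧ ∀ k, q k ≤ p := by
  have hbdd : BddAbove (range q) :=
    bddAbove_of_absorbent (absorbent_nhds_zero hC) fun x hx ↦ ⟨C, forall_mem_range.mpr hx⟩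
  refine ⟨⨆ k, q k, Seminorm.continuous' (r := max C 1) ?_, le_ciSup hbdd⟩
  rw [closedBall_iSup hbdd _ (lt_max_of_lt_right one_pos)]
  filter_upwards [hC] with x hx
  simpa only [mem_iInter, mem_closedBall_zero] using fun k ↦ (hx k).trans (le_max_left C 1)

theorem isClosed_setOf_tendsto_zero [SeminormedRing 𝕜] [Module 𝕜 E] [IsTopologicalAddGroup E]
    {q : ι → Seminorm 𝕜 E} {p : Seminorm 𝕜 E} (hp : Continuous p) {l : Filter ι}
    (hqp : ∀ᶠ k in l, q k ≤ p) : IsClosed {y | Tendsto (fun k ↦ q k y) l (𝓝 0)} := by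
  refine isClosed_of_closure_subset fun y hy ↦ ?_
  refine tendsto_order.mpr ⟨fun a ha ↦ Eventually.of_forall fun k ↦ ha.trans_le (apply_nonneg _ _),
    fun ε hε ↦ ?_⟩
  have hnear : ∀ᶠ z in 𝓝 y, p (z - y) < ε / 2 :=
    (hp.comp (continuous_sub_right y)).continuousAt.eventually_lt continuousAt_const
      (by simpa using half_pos hε)
  obtain ⟨z, hzy, hz⟩ := mem_closure_iff_nhds.mp hy _ hnear
  filter_upwards [hqp, (show Tendsto (fun k ↦ q k z) l (𝓝 0) from hz).eventually
    (gt_mem_nhds (half_pos hε))] with k hk hzk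
  calc q k y = q k (z - (z - y)) := by rw [sub_sub_cancel]
    _ ≤ q k z + q k (z - y) := map_sub_le_add _ _ _
    _ < ε / 2 + ε / 2 := add_lt_add_of_lt_of_le hzk ((hk _).trans hzy.le)
    _ = ε := add_halves ε

end Seminorm

section TendstoZero

variable {𝕜 E F ι : Type*} [NontriviallyNormedField 𝕜] [AddCommGroup E] [Module 𝕜 E]
  [TopologicalSpace E] [AddCommGroup F] [Module 𝕜 F] [TopologicalSpace F] [ContinuousAdd F]
  [ContinuousConstSMul 𝕜 F]

def tendstoZeroSubmodule (U : ι → E →L[𝕜] F) (l : Filter ι) : Submodule 𝕜 E where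
  carrier := {y | Tendsto (fun k ↦ U k y) l (𝓝 0)}
  add_mem' {y z} hy hz := by simpa using hy.add hz
  zero_mem' := by simpa using tendsto_const_nhds
  smul_mem' c y hy := by simpa using hy.const_smul c

theorem mem_tendstoZeroSubmodule {U : ι → E →L[𝕜] F} {l : Filter ι} {y : E} :
    y ∈ tendstoZeroSubmodule U l ↔ Tendsto (fun k ↦ U k y) l (𝓝 0) :=
  Iff.rfl

theorem tendstoZeroSubmodule_eq_top_of_not_isMeagre [IsTopologicalAddGroup E]
    [ContinuousSMul 𝕜 E] {κ : Type*} {q : κ → Seminorm 𝕜 F} (hq : WithSeminorms q)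
    {U : ι → E →L[𝕜] F} {l : Filter ι} {K : Set ι} (hK : K ∈ l)
    (hbdd : ∀ y ∈ tendstoZeroSubmodule U l, ∀ i, BddAbove ((fun k ↦ q i (U k y)) '' K))
    (hD : ¬IsMeagre (tendstoZeroSubmodule U l : Set E)) :
    tendstoZeroSubmodule U l = ⊤ := by
  have hclosed : IsClosed (tendstoZeroSubmodule U l : Set E) := by
    have hD_eq : (tendstoZeroSubmodule U l : Set E) =
        ⋂ i, {y | Tendsto (fun k ↦ (q i).comp (U k).toLinearMap y) l (𝓝 0)} := by
      ext y
      simp [mem_tendstoZeroSubmodule, hq.tendsto_nhds_zero_iff]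
    rw [hD_eq]
    refine isClosed_iInter fun i ↦ ?_
    obtain ⟨C, hC⟩ := Seminorm.exists_eventually_le_of_not_isMeagre
      (q := fun k : K ↦ (q i).comp (U k).toLinearMap)
      (fun k ↦ (hq.continuous_seminorm i).comp (U k).continuous) hD
      (fun y hy ↦ by simpa [image_eq_range] using hbdd y hy i)
    obtain ⟨p, hp, hqp⟩ := Seminorm.exists_continuous_ge_of_eventually_le hC
    exact Seminorm.isClosed_setOf_tendsto_zero hp (mem_of_superset hK fun k hk ↦ hqp ⟨k, hk⟩)
  rw [← SetLike.coe_set_eq, Submodule.top_coe, ← hclosed.closure_eq]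
  exact (Submodule.dense_of_not_isMeagre hD).closure_eq

end TendstoZero

theorem bddAbove_seminorm_smul_image_Icc {Y X κ ι : Type*} [AddCommGroup Y] [Module ℝ Y]
    [TopologicalSpace Y] [AddCommGroup X] [Module ℝ X] [TopologicalSpace X]
    (ΓY : κ → Seminorm ℝ Y) (ΓX : ι → Seminorm ℝ X) (T : ℝ → Y →L[ℝ] X)
    (hloceq : ∀ t₀ : ℝ, 0 ≤ t₀ → ∀ i : ι, ∃ (F : Finset κ) (C : ℝ), 0 ≤ C ∧
      ∀ t : ℝ, 0 ≤ t → t ≤ t₀ → ∀ y : Y, ΓX i (T t y) ≤ C * (F.sup ΓY) y)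
    {w : ℝ → ℝ} (hwpos : ∀ t : ℝ, 0 ≤ t → 0 < w t)
    (hwbdd : ∀ b : ℝ, 0 ≤ b → ∃ C : ℝ, ∀ t : ℝ, 0 ≤ t → t ≤ b → w t ≤ C)
    (i : ι) (y : Y) {b : ℝ} (hb : 0 ≤ b) :
    BddAbove ((fun t ↦ ΓX i (w t • T t y)) '' Icc 0 b) := by
  obtain ⟨F, C, -, hT⟩ := hloceq b hb i
  obtain ⟨M, hM⟩ := hwbdd b hb
  refine ⟨M * (C * F.sup ΓY y), forall_mem_image.mpr fun t ⟨ht0, htb⟩ ↦ ?_⟩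
  rw [map_smul_eq_mul, Real.norm_of_nonneg (hwpos t ht0).le]
  exact mul_le_mul (hM t ht0 htb) (hT t ht0 htb y) (apply_nonneg _ _)
    ((hwpos t ht0).le.trans (hM t ht0 htb))

theorem statement14_general {Y : Type*} [AddCommGroup Y] [Module ℝ Y] [TopologicalSpace Y]
    [BaireSpace Y]
    {κ : Type*} (ΓY : κ → Seminorm ℝ Y) (hΓY : WithSeminorms ΓY)
    {X : Type*} [AddCommGroup X] [Module ℝ X] [TopologicalSpace X]
    {ι : Type*} (ΓX : ι → Seminorm ℝ X) (hΓX : WithSeminorms ΓX)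
    (T : ℝ → Y →L[ℝ] X)
    (hloceq : ∀ t₀ : ℝ, 0 ≤ t₀ → ∀ i : ι, ∃ (F : Finset κ) (C : ℝ), 0 ≤ C ∧
      ∀ t : ℝ, 0 ≤ t → t ≤ t₀ → ∀ y : Y, ΓX i (T t y) ≤ C * (F.sup ΓY) y)
    (H : Set (ℝ → ℝ))
    (hHpos : ∀ h ∈ H, ∀ t : ℝ, 0 ≤ t → 0 < h t)
    (hHbdd : ∀ h ∈ H, ∀ b : ℝ, 0 ≤ b → ∃ C : ℝ, ∀ t : ℝ, 0 ≤ t → t ≤ b → h t ≤ C)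
    (hseq : ∃ hn : ℕ → (ℝ → ℝ), (∀ n : ℕ, hn n ∈ H) ∧
      ∀ h ∈ H, ∃ n : ℕ, Tendsto (fun t : ℝ => hn n t / h t) atTop (nhds 0)) :
    (∀ y : Y, ∃ h ∈ H, Tendsto (fun t : ℝ => h t • T t y) atTop (nhds 0)) ↔
    (∃ h ∈ H, ∀ y : Y, Tendsto (fun t : ℝ => h t • T t y) atTop (nhds 0)) := by
  have := hΓY.topologicalAddGroup
  have := hΓY.continuousSMul
  have := hΓX.topologicalAddGroup
  have := hΓX.continuousSMul
  refine ⟨fun hdecay ↦ ?_, fun ⟨h, hH, hdecay⟩ y ↦ ⟨h, hH, hdecay y⟩⟩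
  obtain ⟨w, hwH, hdom⟩ := hseq
  let D : ℕ → Submodule ℝ Y := fun n ↦ tendstoZeroSubmodule (fun t ↦ w n t • T t) atTop
  have hcover : ⋃ n, (D n : Set Y) = univ := iUnion_eq_univ_iff.mpr fun y ↦ by
    obtain ⟨h, hH, hy⟩ := hdecay y
    obtain ⟨n, hwh⟩ := hdom h hH
    exact ⟨n, hy.smul_of_tendsto_div hwh
      (eventually_ge_atTop 0 |>.mono fun t ht ↦ (hHpos h hH t ht).ne')⟩
  obtain ⟨n, -, hD⟩ := exists_of_not_isMeagre_biUnion countable_univ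
    (A := fun n ↦ (D n : Set Y)) (by
      rw [biUnion_univ, hcover]
      exact not_isMeagre_of_isOpen isOpen_univ univ_nonempty)
  have hbdd : ∀ y ∈ D n, ∀ i, BddAbove ((fun t ↦ ΓX i ((w n t • T t) y)) '' Ici 0) :=
    fun y hy i ↦ bddAbove_image_Ici_of_isBoundedUnder
      (fun b hb ↦ bddAbove_seminorm_smul_image_Icc ΓY ΓX T hloceq (hHpos _ (hwH n))
        (hHbdd _ (hwH n)) i y hb)
      ((hΓX.tendsto_nhds_zero_iff _).mp hy i).isBoundedUnder_le
  have htop := tendstoZeroSubmodule_eq_top_of_not_isMeagre hΓX (Ici_mem_atTop 0) hbdd hD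
  exact ⟨w n, hwH n, fun y ↦ mem_tendstoZeroSubmodule.mp (htop ▸ Submodule.mem_top)⟩

/-- Proposition 4.3: Let `Y` be a locally convex Baire space with seminorm
family `ΓY`, `X` a (not necessarily Hausdorff) locally convex space with seminorm family `ΓX`,
`(T(t))_{t ≥ 0}` a locally equicontinuous family of continuous linear maps `Y → X` and `H` a set
of strictly positive weight functions, bounded on compact intervals, admitting a sequence
`(h_n) ⊆ H` such that every `h ∈ H` dominates some `h_n` (i.e. `h_n/h → 0` at infinity).
Then pointwise decay at some rate from `H` for every point is equivalent to decay at a single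
rate from `H` for all points. -/
theorem statement14 {Y : Type*} [AddCommGroup Y] [Module ℝ Y] [TopologicalSpace Y]
    [BaireSpace Y]
    {κ : Type*} [Nonempty κ] (ΓY : κ → Seminorm ℝ Y) (hΓY : WithSeminorms ΓY)
    {X : Type*} [AddCommGroup X] [Module ℝ X] [TopologicalSpace X]
    {ι : Type*} [Nonempty ι] (ΓX : ι → Seminorm ℝ X) (hΓX : WithSeminorms ΓX)
    (T : ℝ → Y →L[ℝ] X)
    (hloceq : ∀ t₀ : ℝ, 0 ≤ t₀ → ∀ i : ι, ∃ (F : Finset κ) (C : ℝ), 0 ≤ C ∧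
      ∀ t : ℝ, 0 ≤ t → t ≤ t₀ → ∀ y : Y, ΓX i (T t y) ≤ C * (F.sup ΓY) y)
    (H : Set (ℝ → ℝ))
    (hHpos : ∀ h ∈ H, ∀ t : ℝ, 0 ≤ t → 0 < h t)
    (hHbdd : ∀ h ∈ H, ∀ b : ℝ, 0 ≤ b → ∃ C : ℝ, ∀ t : ℝ, 0 ≤ t → t ≤ b → h t ≤ C)
    (hseq : ∃ hn : ℕ → (ℝ → ℝ), (∀ n : ℕ, hn n ∈ H) ∧
      ∀ h ∈ H, ∃ n : ℕ, Tendsto (fun t : ℝ => hn n t / h t) atTop (nhds 0)) :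
    (∀ y : Y, ∃ h ∈ H, Tendsto (fun t : ℝ => h t • T t y) atTop (nhds 0)) ↔
    (∃ h ∈ H, ∀ y : Y, Tendsto (fun t : ℝ => h t • T t y) atTop (nhds 0)) :=
  statement14_general ΓY hΓY ΓX hΓX T hloceq H hHpos hHbdd hseq
end

section
/- Let q : ℝ → ℝ be a C^∞ function with q(x) ≤ 0 for all x ∈ ℝ such that q and all its derivatives are bounded, and for t ≥ 0 and a Schwartz function f define (T(t)f)(x) = exp(∫_x^{x+t} q(τ) dτ) · f(x+t). Set μ_q(t) = sup_{x∈ℝ} ∫_x^{x+t} q(τ) dτ. If liminf_{t→∞} |μ_q(t)|/t > 0, then: for every t ≥ 0 and every f ∈ 𝒮(ℝ) the function T(t)f is again a Schwartz function, and there exists ω > 0 such that for every f ∈ 𝒮(ℝ) and all k, n ∈ ℕ one has lim_{t→∞} e^{ωt} · sup_{x∈ℝ} |x^k · (T(t)f)^{(n)}(x)| = 0. -/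
open Filter Topology MeasureTheory
open scoped Nat

-- helper: iterated deriv of difference
open scoped Nat in
lemma my_iteratedDeriv_sub {f g : ℝ → ℝ} (hf : ContDiff ℝ (⊤ : ℕ∞) f) (hg : ContDiff ℝ (⊤ : ℕ∞) g)
    (n : ℕ) (x : ℝ) :
    iteratedDeriv n (fun y => f y - g y) x = iteratedDeriv n f x - iteratedDeriv n g x := by
  have h1 : (fun y => f y - g y) = fun y => f y + -(g y) := by funext y; ring
  rw [h1, iteratedDeriv_eq_iteratedFDeriv,
    iteratedFDeriv_add_apply' (hf.of_le (by exact_mod_cast le_top)).contDiffAt ((hg.of_le (by exact_mod_cast le_top)).neg).contDiffAt,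
    ContinuousMultilinearMap.add_apply, ← iteratedDeriv_eq_iteratedFDeriv,
    ← iteratedDeriv_eq_iteratedFDeriv, iteratedDeriv_fun_neg, sub_eq_add_neg]

-- helper: iterated derivative of exp
lemma my_iteratedDeriv_exp (i : ℕ) : iteratedDeriv i Real.exp = Real.exp := by
  induction i with
  | zero => simp
  | succ i ih => rw [iteratedDeriv_succ', Real.deriv_exp, ih]

-- helper: binomial estimate
lemma my_pow_bound (k : ℕ) {a t c M : ℝ} (ha : 0 ≤ a) (ht : 0 ≤ t) (hc : 0 ≤ c)
    (hM : ∀ j ≤ k, a ^ j * c ≤ M) : (a + t) ^ k * c ≤ M * (1 + t) ^ k := by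
  rw [add_pow, add_pow, Finset.sum_mul, Finset.mul_sum]
  apply Finset.sum_le_sum
  intro j hj
  have hj' : j ≤ k := Finset.mem_range_succ_iff.mp hj
  calc a ^ j * t ^ (k - j) * (k.choose j : ℝ) * c
      = (a ^ j * c) * (t ^ (k - j) * (k.choose j : ℝ)) := by ring
    _ ≤ M * (t ^ (k - j) * (k.choose j : ℝ)) := by
        apply mul_le_mul_of_nonneg_right (hM j hj') (by positivity)
    _ = M * (1 ^ j * t ^ (k - j) * (k.choose j : ℝ)) := by ring

/-- Proposition 5.1 (i): For `q : ℝ → ℝ` smooth, nonpositive, with all derivatives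
bounded, consider `(T(t)f)(x) = exp(∫_x^{x+t} q) f(x+t)` on the Schwartz space and
`μ_q(t) = sup_x ∫_x^{x+t} q`.  If `liminf_{t→∞} |μ_q(t)|/t > 0` then `T(t)` maps Schwartz
functions to Schwartz functions and the semigroup is uniformly exponentially stable: there is
`ω > 0` such that `e^{ωt}‖x^k (T(t)f)^{(n)}(x)‖ → 0` uniformly in `x`, for all `f, k, n`. -/
theorem statement16 (q : ℝ → ℝ)
    (hq_smooth : ContDiff ℝ (⊤ : ℕ∞) q)
    (hq_nonpos : ∀ x : ℝ, q x ≤ 0)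
    (hq_bdd : ∀ n : ℕ, ∃ C : ℝ, ∀ x : ℝ, |iteratedDeriv n q x| ≤ C)
    (μq : ℝ → ℝ)
    (hμq : ∀ t : ℝ, μq t = ⨆ x : ℝ, ∫ τ in x..(x + t), q τ)
    (hliminf : 0 < Filter.liminf (fun t : ℝ => |μq t| / t) Filter.atTop) :
    (∀ t : ℝ, 0 ≤ t → ∀ f : SchwartzMap ℝ ℝ, ∃ g : SchwartzMap ℝ ℝ,
      ∀ x : ℝ, g x = Real.exp (∫ τ in x..(x + t), q τ) * f (x + t))
    ∧
    (∃ ω > (0:ℝ), ∀ f : SchwartzMap ℝ ℝ, ∀ k n : ℕ, ∀ ε > (0:ℝ),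
      ∃ t₀ : ℝ, ∀ t ≥ t₀, ∀ x : ℝ,
        Real.exp (ω * t) *
          |x ^ k * iteratedDeriv n (fun y : ℝ => Real.exp (∫ τ in y..(y + t), q τ) * f (y + t)) x|
        ≤ ε) := by
  have hq1 : ContDiff ℝ (⊤ : ℕ∞) q := hq_smooth.of_le (by simp)
  have hqc : Continuous q := hq1.continuous
  set Q : ℝ → ℝ := fun x => ∫ τ in (0:ℝ)..x, q τ with hQdef
  have hQderiv : deriv Q = q := funext fun x => Continuous.deriv_integral q hqc 0 x
  have hQdiff : Differentiable ℝ Q := fun x =>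
    ((hqc.integral_hasStrictDerivAt 0 x).hasDerivAt).differentiableAt
  have hQ : ContDiff ℝ (⊤ : ℕ∞) Q := by
    rw [contDiff_infty_iff_deriv]
    exact ⟨hQdiff, hQderiv ▸ hq1⟩
  have hint : ∀ a b : ℝ, IntervalIntegrable q volume a b := fun a b => hqc.intervalIntegrable a b
  have hEeq : ∀ x t : ℝ, (∫ τ in x..(x + t), q τ) = Q (x + t) - Q x := by
    intro x t
    rw [hQdef]
    exact (intervalIntegral.integral_interval_sub_left (hint 0 (x + t)) (hint 0 x)).symm
  set E : ℝ → ℝ → ℝ := fun t x => Q (x + t) - Q x with hEdef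
  have hEsmooth : ∀ t : ℝ, ContDiff ℝ (⊤ : ℕ∞) (E t) := by
    intro t
    exact (hQ.comp (contDiff_id.add contDiff_const)).sub hQ
  have hQiter : ∀ m : ℕ, iteratedDeriv (m + 1) Q = iteratedDeriv m q := by
    intro m; rw [iteratedDeriv_succ', hQderiv]
  have hEiter : ∀ (t : ℝ) (m : ℕ) (x : ℝ),
      iteratedDeriv (m + 1) (E t) x = iteratedDeriv m q (x + t) - iteratedDeriv m q x := by
    intro t m x
    have h1 : iteratedDeriv (m+1) (E t) x
        = iteratedDeriv (m+1) (fun y => Q (y + t)) x - iteratedDeriv (m+1) Q x :=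
      my_iteratedDeriv_sub (hQ.comp (contDiff_id.add contDiff_const)) hQ (m+1) x
    rw [h1, iteratedDeriv_comp_add_const, hQiter]
  obtain ⟨B, hB⟩ : ∃ B : ℕ → ℝ, ∀ m x, |iteratedDeriv m q x| ≤ B m := by
    choose B hB using hq_bdd
    exact ⟨B, hB⟩
  have hEbound : ∀ (t : ℝ) (m : ℕ) (x : ℝ), ‖iteratedFDeriv ℝ (m + 1) (E t) x‖ ≤ 2 * B m := by
    intro t m x
    rw [norm_iteratedFDeriv_eq_norm_iteratedDeriv, Real.norm_eq_abs, hEiter]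
    calc |iteratedDeriv m q (x + t) - iteratedDeriv m q x|
        ≤ |iteratedDeriv m q (x + t)| + |iteratedDeriv m q x| := abs_sub _ _
      _ ≤ B m + B m := add_le_add (hB m _) (hB m _)
      _ = 2 * B m := by ring
  -- core estimate
  have core : ∀ (f : SchwartzMap ℝ ℝ) (k n : ℕ), ∃ K : ℝ, 0 ≤ K ∧ ∀ t, 0 ≤ t → ∀ x : ℝ,
      |x ^ k * iteratedDeriv n (fun y => Real.exp (E t y) * f (y + t)) x|
        ≤ K * (1 + t) ^ k * Real.exp (E t x) := by
    intro f k n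
    set D : ℝ := 1 + ∑ m ∈ Finset.range n, |2 * B m| with hD
    have hD1 : (1 : ℝ) ≤ D := by
      have : 0 ≤ ∑ m ∈ Finset.range n, |2 * B m| := Finset.sum_nonneg fun _ _ => abs_nonneg _
      simp only [hD]; linarith
    have hDge : ∀ m < n, 2 * B m ≤ D := by
      intro m hm
      have h1 : |2 * B m| ≤ ∑ m' ∈ Finset.range n, |2 * B m'| :=
        Finset.single_le_sum (f := fun m' => |2 * B m'|) (fun _ _ => abs_nonneg _) (Finset.mem_range.2 hm)
      have h2 := le_abs_self (2 * B m)
      simp only [hD]; linarith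
    have hED : ∀ (t x : ℝ) (i : ℕ), 1 ≤ i → i ≤ n → ‖iteratedFDeriv ℝ i (E t) x‖ ≤ D ^ i := by
      intro t x i h1 h2
      obtain ⟨m, rfl⟩ : ∃ m, i = m + 1 := ⟨i - 1, (Nat.succ_pred_eq_of_pos h1).symm⟩
      calc ‖iteratedFDeriv ℝ (m + 1) (E t) x‖ ≤ 2 * B m := hEbound t m x
        _ ≤ D := hDge m (by omega)
        _ ≤ D ^ (m + 1) := le_self_pow₀ (by linarith) (by omega)
    have hcomp : ∀ (t x : ℝ) (i : ℕ), i ≤ n →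
        ‖iteratedFDeriv ℝ i (fun y => Real.exp (E t y)) x‖
          ≤ (n ! : ℝ) * D ^ n * Real.exp (E t x) := by
      intro t x i hi
      have h1 : ‖iteratedFDeriv ℝ i (Real.exp ∘ (E t)) x‖
          ≤ (i ! : ℝ) * Real.exp (E t x) * D ^ i := by
        apply norm_iteratedFDeriv_comp_le (N := ((⊤ : ℕ∞) : WithTop ℕ∞)) Real.contDiff_exp (hEsmooth t)
          (by exact_mod_cast le_top) x
        · intro j hj
          rw [norm_iteratedFDeriv_eq_norm_iteratedDeriv, my_iteratedDeriv_exp,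
            Real.norm_eq_abs, Real.abs_exp]
        · intro j hj1 hj2
          exact hED t x j hj1 (le_trans hj2 hi)
      calc ‖iteratedFDeriv ℝ i (fun y => Real.exp (E t y)) x‖
          = ‖iteratedFDeriv ℝ i (Real.exp ∘ (E t)) x‖ := rfl
        _ ≤ (i ! : ℝ) * Real.exp (E t x) * D ^ i := h1
        _ ≤ (n ! : ℝ) * Real.exp (E t x) * D ^ n := by
            have hfact : (i ! : ℝ) ≤ (n ! : ℝ) := by exact_mod_cast Nat.factorial_le hi
            have hpow : D ^ i ≤ D ^ n := pow_le_pow_right₀ (by linarith) hi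
            have he : (0:ℝ) ≤ Real.exp (E t x) := (Real.exp_pos _).le
            have hfn : (0:ℝ) ≤ (i ! : ℝ) := by positivity
            apply mul_le_mul (mul_le_mul hfact le_rfl he (by positivity)) hpow
              (by positivity) (by positivity)
        _ = (n ! : ℝ) * D ^ n * Real.exp (E t x) := by ring
    set M : ℝ := ∑ j ∈ Finset.range (k + 1), ∑ m ∈ Finset.range (n + 1),
        SchwartzMap.seminorm ℝ j m f with hM
    have hMnn : 0 ≤ M := Finset.sum_nonneg fun _ _ => Finset.sum_nonneg fun _ _ =>
      apply_nonneg _ _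
    have hMle : ∀ (j m : ℕ), j ≤ k → m ≤ n → ∀ y : ℝ,
        |y| ^ j * ‖iteratedFDeriv ℝ m (⇑f) y‖ ≤ M := by
      intro j m hj hm y
      have h0 : ‖y‖ ^ j * ‖iteratedFDeriv ℝ m (⇑f) y‖ ≤ SchwartzMap.seminorm ℝ j m f :=
        SchwartzMap.le_seminorm ℝ j m f y
      rw [Real.norm_eq_abs] at h0
      refine h0.trans ?_
      have h1 : SchwartzMap.seminorm ℝ j m f
          ≤ ∑ m' ∈ Finset.range (n + 1), SchwartzMap.seminorm ℝ j m' f :=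
        Finset.single_le_sum (f := fun m' => (SchwartzMap.seminorm ℝ j m' f : ℝ))
          (fun _ _ => apply_nonneg _ _) (Finset.mem_range.2 (by omega))
      refine h1.trans ?_
      exact Finset.single_le_sum
        (f := fun j' => ∑ m' ∈ Finset.range (n + 1), (SchwartzMap.seminorm ℝ j' m' f : ℝ))
        (fun _ _ => Finset.sum_nonneg fun _ _ => apply_nonneg _ _)
        (Finset.mem_range.2 (by omega))
    have hfs : ∀ (t x : ℝ) (m : ℕ), ‖iteratedFDeriv ℝ m (fun y => f (y + t)) x‖
        = ‖iteratedFDeriv ℝ m (⇑f) (x + t)‖ := by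
      intro t x m
      rw [norm_iteratedFDeriv_eq_norm_iteratedDeriv, norm_iteratedFDeriv_eq_norm_iteratedDeriv,
        iteratedDeriv_comp_add_const]
    have hterm : ∀ (t : ℝ), 0 ≤ t → ∀ (x : ℝ) (m : ℕ), m ≤ n →
        |x| ^ k * ‖iteratedFDeriv ℝ m (fun y => f (y + t)) x‖ ≤ M * (1 + t) ^ k := by
      intro t ht x m hm
      rw [hfs]
      have habs : |x| ≤ |x + t| + t := by
        have h1 : |x| = |(x + t) - t| := by ring_nf
        rw [h1]
        calc |(x + t) - t| ≤ |x + t| + |t| := abs_sub _ _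
          _ = |x + t| + t := by rw [abs_of_nonneg ht]
      calc |x| ^ k * ‖iteratedFDeriv ℝ m (⇑f) (x + t)‖
          ≤ (|x + t| + t) ^ k * ‖iteratedFDeriv ℝ m (⇑f) (x + t)‖ :=
            mul_le_mul_of_nonneg_right (pow_le_pow_left₀ (abs_nonneg x) habs k) (norm_nonneg _)
        _ ≤ M * (1 + t) ^ k := my_pow_bound k (abs_nonneg _) ht (norm_nonneg _)
            (fun j hj => hMle j m hj hm (x + t))
    refine ⟨(2 : ℝ) ^ n * ((n ! : ℝ) * D ^ n) * M, by positivity, ?_⟩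
    intro t ht x
    have hh : ContDiff ℝ (⊤ : ℕ∞) (fun y => Real.exp (E t y)) := Real.contDiff_exp.comp (hEsmooth t)
    have hfssm : ContDiff ℝ (⊤ : ℕ∞) (fun y : ℝ => f (y + t)) :=
      (f.smooth').comp (contDiff_id.add contDiff_const)
    rw [abs_mul, abs_pow, ← Real.norm_eq_abs (iteratedDeriv n _ x),
      ← norm_iteratedFDeriv_eq_norm_iteratedDeriv]
    have h2 := norm_iteratedFDeriv_mul_le (n := n) hh hfssm x (by exact_mod_cast le_top)
    calc |x| ^ k * ‖iteratedFDeriv ℝ n (fun y => Real.exp (E t y) * f (y + t)) x‖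
        ≤ |x| ^ k * ∑ i ∈ Finset.range (n + 1), (n.choose i : ℝ)
            * ‖iteratedFDeriv ℝ i (fun y => Real.exp (E t y)) x‖
            * ‖iteratedFDeriv ℝ (n - i) (fun y => f (y + t)) x‖ :=
          mul_le_mul_of_nonneg_left h2 (by positivity)
      _ = ∑ i ∈ Finset.range (n + 1), (n.choose i : ℝ)
            * ‖iteratedFDeriv ℝ i (fun y => Real.exp (E t y)) x‖
            * (|x| ^ k * ‖iteratedFDeriv ℝ (n - i) (fun y => f (y + t)) x‖) := by
          rw [Finset.mul_sum]; apply Finset.sum_congr rfl; intro i _; ring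
      _ ≤ ∑ i ∈ Finset.range (n + 1), (n.choose i : ℝ)
            * ((n ! : ℝ) * D ^ n * Real.exp (E t x)) * (M * (1 + t) ^ k) := by
          apply Finset.sum_le_sum
          intro i hi
          have hi' : i ≤ n := Finset.mem_range_succ_iff.mp hi
          have ha := hcomp t x i hi'
          have hb := hterm t ht x (n - i) (by omega)
          have h3 : (0:ℝ) ≤ (n.choose i : ℝ) := by positivity
          apply mul_le_mul (mul_le_mul_of_nonneg_left ha h3) hb
            (by positivity) (by positivity)
      _ = (2 : ℝ) ^ n * ((n ! : ℝ) * D ^ n) * M * (1 + t) ^ k * Real.exp (E t x) := by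
          rw [← Finset.sum_mul, ← Finset.sum_mul]
          have h4 : ∑ i ∈ Finset.range (n + 1), (n.choose i : ℝ) = 2 ^ n := by
            exact_mod_cast congrArg (Nat.cast : ℕ → ℝ) (Nat.sum_range_choose n)
          rw [h4]; ring
  -- nonpositivity of E for t ≥ 0
  have hEnonpos : ∀ t : ℝ, 0 ≤ t → ∀ x : ℝ, E t x ≤ 0 := by
    intro t ht x
    have h1 := hEeq x t
    show Q (x + t) - Q x ≤ 0
    rw [← h1]
    have h2 : 0 ≤ ∫ τ in x..(x + t), (fun y => -q y) τ :=
      intervalIntegral.integral_nonneg (by linarith) (fun u _ => neg_nonneg.2 (hq_nonpos u))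
    rw [intervalIntegral.integral_neg] at h2
    linarith
  -- Part 1
  have part1 : ∀ t : ℝ, 0 ≤ t → ∀ f : SchwartzMap ℝ ℝ, ∃ g : SchwartzMap ℝ ℝ,
      ∀ x : ℝ, g x = Real.exp (∫ τ in x..(x + t), q τ) * f (x + t) := by
    intro t ht f
    refine ⟨⟨fun x => Real.exp (E t x) * f (x + t), ?_, ?_⟩, ?_⟩
    · exact (Real.contDiff_exp.comp (hEsmooth t)).mul
        ((f.smooth').comp (contDiff_id.add contDiff_const))
    · intro k n
      obtain ⟨K, hK0, hK⟩ := core f k n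
      refine ⟨K * (1 + t) ^ k, fun x => ?_⟩
      have h1 := hK t ht x
      have h2 : Real.exp (E t x) ≤ 1 := Real.exp_le_one_iff.mpr (hEnonpos t ht x)
      calc ‖x‖ ^ k * ‖iteratedFDeriv ℝ n (fun x => Real.exp (E t x) * f (x + t)) x‖
          = |x ^ k * iteratedDeriv n (fun x => Real.exp (E t x) * f (x + t)) x| := by
            rw [norm_iteratedFDeriv_eq_norm_iteratedDeriv, Real.norm_eq_abs, Real.norm_eq_abs,
              abs_mul, abs_pow]
        _ ≤ K * (1 + t) ^ k * Real.exp (E t x) := h1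
        _ ≤ K * (1 + t) ^ k * 1 := by
            apply mul_le_mul_of_nonneg_left h2 (by positivity)
        _ = K * (1 + t) ^ k := mul_one _
    · intro x
      show Real.exp (E t x) * f (x + t) = _
      rw [hEeq x t]
  -- μq facts
  have hμ_eq : ∀ t : ℝ, μq t = ⨆ x : ℝ, E t x := by
    intro t; rw [hμq t]
    congr 1; funext x; rw [hEeq]
  have hμ_le : ∀ t : ℝ, 0 ≤ t → ∀ x : ℝ, E t x ≤ μq t := by
    intro t ht x
    rw [hμ_eq]
    refine le_ciSup ⟨0, ?_⟩ x
    rintro y ⟨x', rfl⟩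
    exact hEnonpos t ht x'
  have hμ_nonpos : ∀ t : ℝ, 0 ≤ t → μq t ≤ 0 := by
    intro t ht; rw [hμ_eq]
    exact Real.iSup_nonpos (fun x => hEnonpos t ht x)
  -- liminf consequences
  set L := Filter.liminf (fun t : ℝ => |μq t| / t) Filter.atTop with hL
  have hL0 : 0 < L := hliminf
  set c : ℝ := L / 2 with hc
  have hc0 : 0 < c := by positivity
  have hbdd : Filter.IsBoundedUnder (· ≥ ·) Filter.atTop (fun t : ℝ => |μq t| / t) := by
    apply Filter.isBoundedUnder_of_eventually_ge (a := (0:ℝ))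
    filter_upwards [eventually_ge_atTop (1:ℝ)] with t ht
    positivity
  have hev : ∀ᶠ t in Filter.atTop, c < |μq t| / t :=
    Filter.eventually_lt_of_lt_liminf (by rw [← hL]; linarith) hbdd
  refine ⟨part1, c / 2, by positivity, ?_⟩
  intro f k n ε hε
  obtain ⟨K, hK0, hK⟩ := core f k n
  -- decay of the dominating function
  set a : ℝ := c / 2 with ha
  have ha0 : 0 < a := by positivity
  have h0 : Filter.Tendsto (fun s : ℝ => s ^ k * Real.exp (-s)) Filter.atTop (𝓝 0) :=
    Real.tendsto_pow_mul_exp_neg_atTop_nhds_zero k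
  have h1 : Filter.Tendsto (fun t : ℝ => a * (1 + t)) Filter.atTop Filter.atTop := by
    apply Filter.Tendsto.const_mul_atTop ha0
    exact tendsto_atTop_add_const_left _ 1 Filter.tendsto_id
  have h2 := h0.comp h1
  have h3 := h2.const_mul (K * (a ^ k)⁻¹ * Real.exp a)
  rw [mul_zero] at h3
  have h4 : Filter.Tendsto (fun t : ℝ => K * (1 + t) ^ k * Real.exp (-(a * t)))
      Filter.atTop (𝓝 0) := by
    refine h3.congr fun t => ?_
    have e1 : Real.exp (-(a * (1 + t))) = Real.exp (-a) * Real.exp (-(a * t)) := by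
      rw [← Real.exp_add]; ring_nf
    show K * (a ^ k)⁻¹ * Real.exp a * ((a * (1 + t)) ^ k * Real.exp (-(a * (1 + t))))
        = K * (1 + t) ^ k * Real.exp (-(a * t))
    rw [mul_pow, e1, Real.exp_neg a]
    have hak : (a : ℝ) ^ k ≠ 0 := by positivity
    have hea : Real.exp a ≠ 0 := (Real.exp_pos a).ne'
    field_simp
  have h5 : ∀ᶠ t : ℝ in Filter.atTop, K * (1 + t) ^ k * Real.exp (-(a * t)) < ε :=
    h4.eventually_lt_const hε
  obtain ⟨t₀, ht₀⟩ := Filter.eventually_atTop.1 (h5.and (hev.and (eventually_ge_atTop (1:ℝ))))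
  refine ⟨t₀, fun t ht x => ?_⟩
  obtain ⟨hlt, hcv, ht1⟩ := ht₀ t ht
  have ht0 : (0:ℝ) ≤ t := by linarith
  have hfun : (fun y : ℝ => Real.exp (∫ τ in y..(y + t), q τ) * f (y + t))
      = fun y => Real.exp (E t y) * f (y + t) := by
    funext y; rw [hEeq]
  rw [hfun]
  have h6 := hK t ht0 x
  have h7 : E t x ≤ -(c * t) := by
    have h8 : μq t ≤ 0 := hμ_nonpos t ht0
    have h9 : c < -μq t / t := by rwa [abs_of_nonpos h8] at hcv
    have h10 : c * t < -μq t := (lt_div_iff₀ (by linarith : (0:ℝ) < t)).1 h9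
    linarith [hμ_le t ht0 x]
  have hexp : Real.exp (E t x) ≤ Real.exp (-(c * t)) := Real.exp_le_exp.2 h7
  calc Real.exp (c / 2 * t) * |x ^ k * iteratedDeriv n (fun y => Real.exp (E t y) * f (y + t)) x|
      ≤ Real.exp (c / 2 * t) * (K * (1 + t) ^ k * Real.exp (E t x)) :=
        mul_le_mul_of_nonneg_left h6 (Real.exp_pos _).le
    _ ≤ Real.exp (c / 2 * t) * (K * (1 + t) ^ k * Real.exp (-(c * t))) := by
        apply mul_le_mul_of_nonneg_left _ (Real.exp_pos _).le
        apply mul_le_mul_of_nonneg_left hexp (by positivity)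
    _ = K * (1 + t) ^ k * Real.exp (-(a * t)) := by
        rw [ha, ← mul_assoc, mul_comm (Real.exp (c / 2 * t)), mul_assoc, ← Real.exp_add]
        ring_nf
    _ ≤ ε := le_of_lt hlt
end

section
/- Fix q ∈ ℂ with Re q ≤ 0 and for n ∈ ℕ define |g|_n² = ∫_ℝ (1+|x|²)^n |g(x)|² dx. Then for every f ∈ L²(ℝ, ℂ) and every n ∈ ℕ one has lim_{t→∞} ∫_ℝ (1+|x|²)^n |e^{qt − x²t} f(x)|² dx = 0; that is, the multiplication semigroup (T̂(t)f)(x) = e^{qt − x²t} f(x) is strongly stable on the projective limit Ĥ of the weighted L² spaces {f ∈ L²(ℝ) : |f|_n < ∞ for all n}. -/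
open Filter Topology MeasureTheory

/-!
Since `|e^{qt - x²t}|² = e^{2(Re q - x²)t} ≤ e^{-2x²t}` and `(1 + x²)^n ≤ e^{n x²}`, the
weighted multiplier `(1 + x²)^n |e^{qt - x²t}|²` is bounded by `1` once `2t ≥ n`, and it tends
to `0` at every `x ≠ 0`. Dominated convergence with dominating function `|f|²` gives the claim.
-/

theorem tendsto_lintegral_ofReal_mul_norm_sq_of_memLp {α E ι : Type*} [MeasurableSpace α]
    {μ : Measure α} [NormedAddCommGroup E] {l : Filter ι} [l.IsCountablyGenerated]
    {f : α → E} (hf : MemLp f 2 μ) {w : ι → α → ℝ}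
    (hw_meas : ∀ᶠ i in l, AEMeasurable (w i) μ) (hw_le : ∀ᶠ i in l, ∀ᵐ x ∂μ, w i x ≤ 1)
    (hw_lim : ∀ᵐ x ∂μ, Tendsto (fun i => w i x) l (𝓝 0)) :
    Tendsto (fun i => ∫⁻ x, ENNReal.ofReal (w i x * ‖f x‖ ^ 2) ∂μ) l (𝓝 0) := by
  have hf_sq : Integrable (fun x => ‖f x‖ ^ 2) μ := hf.integrable_norm_pow two_ne_zero
  have hf_meas : AEMeasurable (fun x => ‖f x‖ ^ 2) μ := hf_sq.aemeasurable
  rw [← lintegral_zero]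
  exact tendsto_lintegral_filter_of_dominated_convergence' (fun x => ENNReal.ofReal (‖f x‖ ^ 2))
    (hw_meas.mono fun i hi => (hi.mul hf_meas).ennreal_ofReal)
    (hw_le.mono fun i hi => hi.mono fun x hx =>
      ENNReal.ofReal_le_ofReal (mul_le_of_le_one_left (by positivity) hx))
    hf_sq.lintegral_lt_top.ne
    (hw_lim.mono fun x hx => by simpa using ENNReal.tendsto_ofReal (hx.mul_const (‖f x‖ ^ 2)))

theorem Complex.norm_exp_mul_sub_sq_mul (q : ℂ) (t x : ℝ) :
    ‖Complex.exp (q * t - (x : ℂ) ^ 2 * t)‖ = Real.exp ((q.re - x ^ 2) * t) := by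
  rw [Complex.norm_exp]
  congr 1
  simp only [Complex.sub_re, Complex.mul_re, Complex.ofReal_re, Complex.ofReal_im, pow_two]
  ring

theorem one_add_sq_pow_le_exp (x : ℝ) (n : ℕ) : (1 + x ^ 2) ^ n ≤ Real.exp (n * x ^ 2) := by
  rw [Real.exp_nat_mul]
  gcongr
  linarith [Real.add_one_le_exp (x ^ 2)]

theorem one_add_sq_pow_mul_norm_exp_sq_le_one {q : ℂ} (hq : q.re ≤ 0) {n : ℕ} {t : ℝ}
    (ht : n ≤ 2 * t) (x : ℝ) :
    (1 + |x| ^ 2) ^ n * ‖Complex.exp (q * t - (x : ℂ) ^ 2 * t)‖ ^ 2 ≤ 1 := by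
  have hqt : q.re * t ≤ 0 :=
    mul_nonpos_of_nonpos_of_nonneg hq (by linarith [n.cast_nonneg (α := ℝ)])
  rw [sq_abs, Complex.norm_exp_mul_sub_sq_mul, ← Real.exp_nat_mul]
  calc (1 + x ^ 2) ^ n * Real.exp (((2 : ℕ) : ℝ) * ((q.re - x ^ 2) * t))
      ≤ Real.exp (n * x ^ 2) * Real.exp (-(n * x ^ 2)) := by
        gcongr
        · exact one_add_sq_pow_le_exp x n
        · push_cast
          nlinarith [sq_nonneg x]
    _ = 1 := by rw [← Real.exp_add, add_neg_cancel, Real.exp_zero]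

theorem tendsto_norm_exp_mul_sub_sq_mul_sq {q : ℂ} (hq : q.re ≤ 0) {x : ℝ} (hx : x ≠ 0) :
    Tendsto (fun t : ℝ => ‖Complex.exp (q * t - (x : ℂ) ^ 2 * t)‖ ^ 2) atTop (𝓝 0) := by
  have hcoef : q.re - x ^ 2 < 0 := by linarith [pow_pos (abs_pos.mpr hx) 2, sq_abs x]
  simp only [Complex.norm_exp_mul_sub_sq_mul]
  simpa using ((Real.tendsto_exp_atBot.comp
    (tendsto_id.const_mul_atTop_of_neg hcoef)).pow 2)

/-- Proposition 5.4 (iii): If `Re q ≤ 0` then the Fourier-transformed scaled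
Gaussian semigroup `(T̂(t)f)(x) = e^{qt - x²t} f(x)` is strongly stable on the projective limit
of the weighted `L²` spaces: for every `f ∈ L²(ℝ, ℂ)` and every `n ∈ ℕ` one has
`∫ (1+|x|²)^n |e^{qt - x²t} f(x)|² dx → 0` as `t → ∞`. -/
theorem statement19 (q : ℂ) (hq : q.re ≤ 0) (f : ℝ → ℂ)
    (hf : MeasureTheory.MemLp f 2 (MeasureTheory.volume : MeasureTheory.Measure ℝ)) :
    ∀ n : ℕ,
      Tendsto (fun t : ℝ => ∫⁻ x : ℝ, ENNReal.ofReal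
          ((1 + |x| ^ 2) ^ n * ‖Complex.exp (q * t - (x : ℂ) ^ 2 * t) * f x‖ ^ 2))
        atTop (nhds 0) := by
  intro n
  simp only [norm_mul, mul_pow, ← mul_assoc]
  refine tendsto_lintegral_ofReal_mul_norm_sq_of_memLp hf
    (Eventually.of_forall fun t => by fun_prop) ?_ ?_
  · filter_upwards [eventually_ge_atTop ((n : ℝ) / 2)] with t ht
    exact Eventually.of_forall fun x => one_add_sq_pow_mul_norm_exp_sq_le_one hq (by linarith) x
  · filter_upwards [compl_mem_ae_iff.mpr (measure_singleton (0 : ℝ))] with x hx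
    simpa only [mul_zero] using
      (tendsto_norm_exp_mul_sub_sq_mul_sq hq hx).const_mul ((1 + |x| ^ 2) ^ n)
end
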